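/- arXiv:1012.3596 — 12 statements merged into one kernel-verified Lean document; each statement's English description precedes it below -/
import Mathlib

section
/- Let R = (r_{ij}) and S = (s_{ij}) be matrices with entries in A, let f and g be monotonically increasing weight functions with C_g = ∑_{n=1}^∞ 1/g(n) < ∞, and suppose ‖R‖_f, ‖R‖_g, ‖S‖_f, ‖S‖_g are all finite. Then for all i, j ∈ ℕ the series ∑_{k=1}^∞ r_{ik} s_{kj} converges absolutely in A, i.e. ∑_{k=1}^∞ ‖r_{ik}‖·‖s_{kj}‖ < ∞. -/
/-!
Since `g` is monotone, row `i` of `R` satisfies `‖r_{ik}‖ ≤ ‖R‖_g / g(k)`, while column `j`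
of `S` is bounded by `‖S‖_g / g(1)`. Hence `‖r_{ik}‖ ‖s_{kj}‖` is dominated
by a constant multiple of `1 / g(k)`, which is summable.
-/

section WeightedMatrix

variable {ι E : Type*} [LinearOrder ι] [SeminormedAddGroup E]
  {g : ι → ℝ} {R : ι → ι → E} {C : ℝ}

lemma norm_le_div_of_mem_upperBounds_weighted (hg : Monotone g) (hgpos : ∀ n, 0 < g n)
    (hC : C ∈ upperBounds (Set.range fun p : ι × ι => g (max p.1 p.2) * ‖R p.1 p.2‖))
    {i k n : ι} (hn : n ≤ max i k) : ‖R i k‖ ≤ C / g n := by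
  rw [le_div_iff₀ (hgpos n), mul_comm]
  calc g n * ‖R i k‖ ≤ g (max i k) * ‖R i k‖ := by gcongr; exact hg hn
    _ ≤ C := hC ⟨(i, k), rfl⟩

end WeightedMatrix

theorem matMul_summable_general
    {A : Type*} [NonUnitalNormedRing A]
    (g : ℕ+ → ℝ)
    (hgmono : Monotone g) (hgpos : ∀ n, 0 < g n)
    (hCg : Summable fun n : ℕ+ => 1 / g n)
    (R S : ℕ+ → ℕ+ → A)
    (hRg : BddAbove (Set.range fun p : ℕ+ × ℕ+ => g (max p.1 p.2) * ‖R p.1 p.2‖))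
    (hSg : BddAbove (Set.range fun p : ℕ+ × ℕ+ => g (max p.1 p.2) * ‖S p.1 p.2‖)) :
    ∀ i j : ℕ+, Summable fun k : ℕ+ => ‖R i k‖ * ‖S k j‖ := by
  obtain ⟨M, hM⟩ := hRg
  obtain ⟨N, hN⟩ := hSg
  intro i j
  have hR (k : ℕ+) : ‖R i k‖ ≤ M / g k :=
    norm_le_div_of_mem_upperBounds_weighted hgmono hgpos hM (le_max_right i k)
  have hS (k : ℕ+) : ‖S k j‖ ≤ N / g 1 :=
    norm_le_div_of_mem_upperBounds_weighted hgmono hgpos hN (le_max_of_le_left one_le)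
  refine (hCg.mul_left (M * (N / g 1))).of_nonneg_of_le (fun k => by positivity) fun k => ?_
  calc ‖R i k‖ * ‖S k j‖ ≤ M / g k * (N / g 1) :=
        mul_le_mul (hR k) (hS k) (norm_nonneg _) ((norm_nonneg _).trans (hR k))
    _ = M * (N / g 1) * (1 / g k) := by ring

/-- For matrices `R, S` over a (not necessarily unital) Banach algebra `A`,
monotone weights `f, g : ℕ+ → (0,∞)` with `C_g = ∑ 1/g(n) < ∞`, and all four weighted
norms `‖R‖_f, ‖R‖_g, ‖S‖_f, ‖S‖_g` finite, the series `∑_k r_{ik} s_{kj}` converges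
absolutely in `A` for all `i, j`. -/
theorem matMul_summable
    {A : Type*} [NonUnitalNormedRing A] [CompleteSpace A]
    (f g : ℕ+ → ℝ) (hfmono : Monotone f) (hfpos : ∀ n, 0 < f n)
    (hgmono : Monotone g) (hgpos : ∀ n, 0 < g n)
    (hCg : Summable fun n : ℕ+ => 1 / g n)
    (R S : ℕ+ → ℕ+ → A)
    (hRf : BddAbove (Set.range fun p : ℕ+ × ℕ+ => f (max p.1 p.2) * ‖R p.1 p.2‖))
    (hRg : BddAbove (Set.range fun p : ℕ+ × ℕ+ => g (max p.1 p.2) * ‖R p.1 p.2‖))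
    (hSf : BddAbove (Set.range fun p : ℕ+ × ℕ+ => f (max p.1 p.2) * ‖S p.1 p.2‖))
    (hSg : BddAbove (Set.range fun p : ℕ+ × ℕ+ => g (max p.1 p.2) * ‖S p.1 p.2‖)) :
    ∀ i j : ℕ+, Summable fun k : ℕ+ => ‖R i k‖ * ‖S k j‖ :=
  matMul_summable_general g hgmono hgpos hCg R S hRg hSg
end

section
/- Let R = (r_{ij}) and S = (s_{ij}) be matrices with entries in A, let f and g be monotonically increasing weight functions with C_g = ∑_{n=1}^∞ 1/g(n) < ∞, and suppose ‖R‖_f and ‖S‖_g are finite. Then for all i, j ∈ ℕ with i ≥ j one has f(max(i,j)) · ∑_{k=1}^∞ ‖r_{ik}‖·‖s_{kj}‖ ≤ C_g · ‖R‖_f · ‖S‖_g. -/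
/-- The weighted norm `‖T‖_f = sup_{i,j} f(max(i,j))·‖t_{ij}‖` (as a real supremum). -/
noncomputable def wnorm {A : Type*} [NonUnitalNormedRing A]
    (f : ℕ+ → ℝ) (T : ℕ+ → ℕ+ → A) : ℝ :=
  sSup (Set.range fun p : ℕ+ × ℕ+ => f (max p.1 p.2) * ‖T p.1 p.2‖)

/-- Finiteness of the weighted norm `‖T‖_f`. -/
def WFinite {A : Type*} [NonUnitalNormedRing A]
    (f : ℕ+ → ℝ) (T : ℕ+ → ℕ+ → A) : Prop :=
  BddAbove (Set.range fun p : ℕ+ × ℕ+ => f (max p.1 p.2) * ‖T p.1 p.2‖)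

/-- If `‖R‖_f` and `‖S‖_g` are finite and `C_g = ∑ 1/g(n) < ∞`, then for all
`i ≥ j` one has `f(max(i,j)) · ∑_k ‖r_{ik}‖·‖s_{kj}‖ ≤ C_g · ‖R‖_f · ‖S‖_g`
(in particular the sum converges). -/
theorem estimate_ge
    {A : Type*} [NonUnitalNormedRing A] [CompleteSpace A]
    (f g : ℕ+ → ℝ) (hfmono : Monotone f) (hfpos : ∀ n, 0 < f n)
    (hgmono : Monotone g) (hgpos : ∀ n, 0 < g n)
    (hCg : Summable fun n : ℕ+ => 1 / g n)
    (R S : ℕ+ → ℕ+ → A)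
    (hRf : WFinite f R) (hSg : WFinite g S) :
    ∀ i j : ℕ+, j ≤ i →
      (Summable fun k : ℕ+ => ‖R i k‖ * ‖S k j‖) ∧
      f (max i j) * (∑' k : ℕ+, ‖R i k‖ * ‖S k j‖) ≤
        (∑' n : ℕ+, 1 / g n) * (wnorm f R) * (wnorm g S) := by
  intro i j hji
  have hwR : ∀ p : ℕ+ × ℕ+, f (max p.1 p.2) * ‖R p.1 p.2‖ ≤ wnorm f R :=
    fun p => le_csSup hRf ⟨p, rfl⟩
  have hwS : ∀ p : ℕ+ × ℕ+, g (max p.1 p.2) * ‖S p.1 p.2‖ ≤ wnorm g S :=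
    fun p => le_csSup hSg ⟨p, rfl⟩
  have hwR0 : 0 ≤ wnorm f R := le_trans (mul_nonneg (hfpos _).le (norm_nonneg _)) (hwR (1,1))
  have hwS0 : 0 ≤ wnorm g S := le_trans (mul_nonneg (hgpos _).le (norm_nonneg _)) (hwS (1,1))
  have key : ∀ k : ℕ+, f i * (‖R i k‖ * ‖S k j‖) ≤ (1 / g k) * wnorm f R * wnorm g S := by
    intro k
    have h1 : f i * ‖R i k‖ ≤ wnorm f R := by
      calc f i * ‖R i k‖ ≤ f (max i k) * ‖R i k‖ :=
            mul_le_mul_of_nonneg_right (hfmono (le_max_left i k)) (norm_nonneg _)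
        _ ≤ wnorm f R := hwR (i,k)
    have h2 : g k * ‖S k j‖ ≤ wnorm g S := by
      calc g k * ‖S k j‖ ≤ g (max k j) * ‖S k j‖ :=
            mul_le_mul_of_nonneg_right (hgmono (le_max_left k j)) (norm_nonneg _)
        _ ≤ wnorm g S := hwS (k,j)
    have hgk := hgpos k
    rw [div_mul_eq_mul_div, div_mul_eq_mul_div, one_mul, le_div_iff₀ hgk]
    calc f i * (‖R i k‖ * ‖S k j‖) * g k = (f i * ‖R i k‖) * (g k * ‖S k j‖) := by ring
      _ ≤ wnorm f R * wnorm g S :=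
          mul_le_mul h1 h2 (mul_nonneg (hgpos k).le (norm_nonneg _)) hwR0
  have hfi := hfpos i
  have hsum2 : Summable fun k : ℕ+ => (1 / g k) * wnorm f R * wnorm g S :=
    (hCg.mul_right _).mul_right _
  have hsum : Summable fun k : ℕ+ => ‖R i k‖ * ‖S k j‖ := by
    apply (hsum2.mul_left (1 / f i)).of_nonneg_of_le
      (fun k => mul_nonneg (norm_nonneg _) (norm_nonneg _))
    intro k
    rw [one_div (f i), inv_mul_eq_div, le_div_iff₀ hfi]
    calc ‖R i k‖ * ‖S k j‖ * f i = f i * (‖R i k‖ * ‖S k j‖) := by ring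
      _ ≤ 1 / g k * wnorm f R * wnorm g S := key k
  refine ⟨hsum, ?_⟩
  rw [max_eq_left hji, ← tsum_mul_left]
  calc (∑' k : ℕ+, f i * (‖R i k‖ * ‖S k j‖))
      ≤ ∑' k : ℕ+, (1 / g k) * wnorm f R * wnorm g S :=
        Summable.tsum_le_tsum key (hsum.mul_left _) hsum2
    _ = (∑' n : ℕ+, 1 / g n) * wnorm f R * wnorm g S := by
        rw [tsum_mul_right, tsum_mul_right]
end

section
/- Let R = (r_{ij}) and S = (s_{ij}) be matrices with entries in A, let f and g be monotonically increasing weight functions with C_g = ∑_{n=1}^∞ 1/g(n) < ∞, and suppose ‖R‖_g and ‖S‖_f are finite. Then for all i, j ∈ ℕ with i ≤ j one has f(max(i,j)) · ∑_{k=1}^∞ ‖r_{ik}‖·‖s_{kj}‖ ≤ C_g · ‖R‖_g · ‖S‖_f. -/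
/-- If `‖R‖_g` and `‖S‖_f` are finite and `C_g = ∑ 1/g(n) < ∞`, then for all
`i ≤ j` one has `f(max(i,j)) · ∑_k ‖r_{ik}‖·‖s_{kj}‖ ≤ C_g · ‖R‖_g · ‖S‖_f`
(in particular the sum converges). -/
theorem estimate_le
    {A : Type*} [NonUnitalNormedRing A] [CompleteSpace A]
    (f g : ℕ+ → ℝ) (hfmono : Monotone f) (hfpos : ∀ n, 0 < f n)
    (hgmono : Monotone g) (hgpos : ∀ n, 0 < g n)
    (hCg : Summable fun n : ℕ+ => 1 / g n)
    (R S : ℕ+ → ℕ+ → A)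
    (hRg : WFinite g R) (hSf : WFinite f S) :
    ∀ i j : ℕ+, i ≤ j →
      (Summable fun k : ℕ+ => ‖R i k‖ * ‖S k j‖) ∧
      f (max i j) * (∑' k : ℕ+, ‖R i k‖ * ‖S k j‖) ≤
        (∑' n : ℕ+, 1 / g n) * (wnorm g R) * (wnorm f S) := by
  intro i j hij
  set CR := wnorm g R with hCR
  set CS := wnorm f S with hCS
  have hRle : ∀ k : ℕ+, g (max i k) * ‖R i k‖ ≤ CR := fun k =>
    le_csSup hRg ⟨(i, k), rfl⟩
  have hSle : ∀ k : ℕ+, f (max k j) * ‖S k j‖ ≤ CS := fun k =>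
    le_csSup hSf ⟨(k, j), rfl⟩
  have hCRnn : 0 ≤ CR := le_trans (mul_nonneg (hgpos _).le (norm_nonneg _)) (hRle 1)
  have hCSnn : 0 ≤ CS := le_trans (mul_nonneg (hfpos _).le (norm_nonneg _)) (hSle 1)
  -- key pointwise bounds
  have hR' : ∀ k : ℕ+, g k * ‖R i k‖ ≤ CR := fun k =>
    le_trans (mul_le_mul_of_nonneg_right (hgmono (le_max_right i k)) (norm_nonneg _)) (hRle k)
  have hS' : ∀ k : ℕ+, f j * ‖S k j‖ ≤ CS := fun k =>
    le_trans (mul_le_mul_of_nonneg_right (hfmono (le_max_right k j)) (norm_nonneg _)) (hSle k)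
  have key : ∀ k : ℕ+, f j * (‖R i k‖ * ‖S k j‖) ≤ 1 / g k * CR * CS := by
    intro k
    have hgk := (hgpos k)
    have h1 : ‖R i k‖ ≤ CR / g k := (le_div_iff₀' hgk).2 (hR' k)
    have h2 : f j * ‖S k j‖ ≤ CS := hS' k
    calc f j * (‖R i k‖ * ‖S k j‖) = ‖R i k‖ * (f j * ‖S k j‖) := by ring
      _ ≤ (CR / g k) * CS := by
          apply mul_le_mul h1 h2 (mul_nonneg (hfpos _).le (norm_nonneg _)) (div_nonneg hCRnn hgk.le)
      _ = 1 / g k * CR * CS := by ring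
  have hfj : 0 < f j := hfpos j
  have hsumm : Summable fun k : ℕ+ => ‖R i k‖ * ‖S k j‖ := by
    apply Summable.of_nonneg_of_le (fun k => by positivity)
      (fun k => ?_) (hCg.mul_right (CR * CS / f j))
    have := key k
    rw [show (1 : ℝ) / g k * (CR * CS / f j) = (1 / g k * CR * CS) / f j by ring,
      le_div_iff₀ hfj]
    linarith [key k]
  refine ⟨hsumm, ?_⟩
  have hmax : max i j = j := max_eq_right hij
  rw [hmax]
  have h1 : f j * (∑' k : ℕ+, ‖R i k‖ * ‖S k j‖)
      = ∑' k : ℕ+, f j * (‖R i k‖ * ‖S k j‖) := by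
    rw [tsum_mul_left]
  rw [h1]
  have h2 : (∑' k : ℕ+, f j * (‖R i k‖ * ‖S k j‖)) ≤ ∑' k : ℕ+, 1 / g k * CR * CS := by
    apply Summable.tsum_le_tsum key (hsumm.mul_left _) ((hCg.mul_right CR).mul_right CS)
  calc (∑' k : ℕ+, f j * (‖R i k‖ * ‖S k j‖)) ≤ ∑' k : ℕ+, 1 / g k * CR * CS := h2
    _ = (∑' n : ℕ+, 1 / g n) * CR * CS := by
        rw [← tsum_mul_right, ← tsum_mul_right]
end

section
/- Let R = (r_{ij}) and S = (s_{ij}) be matrices with entries in A, let f and g be monotonically increasing weight functions with C_g = ∑_{n=1}^∞ 1/g(n) < ∞, and suppose ‖R‖_f, ‖R‖_g, ‖S‖_f, ‖S‖_g are all finite. Then the matrix product RS defined by (RS)_{ij} := ∑_{k=1}^∞ r_{ik} s_{kj} satisfies ‖RS‖_f < ∞. -/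
/-- The entrywise matrix product `(RS)_{ij} = ∑_k r_{ik} s_{kj}`. -/
noncomputable def matMul {A : Type*} [NonUnitalNormedRing A]
    (R S : ℕ+ → ℕ+ → A) : ℕ+ → ℕ+ → A :=
  fun i j => ∑' k : ℕ+, R i k * S k j

/-- If `f, g` are monotone weights with `C_g = ∑ 1/g(n) < ∞` and
`‖R‖_f, ‖R‖_g, ‖S‖_f, ‖S‖_g` are all finite, then the matrix product `RS` is defined by
entrywise absolutely convergent series and satisfies `‖RS‖_f < ∞`. -/
theorem matMul_wFinite
    {A : Type*} [NonUnitalNormedRing A] [CompleteSpace A]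
    (f g : ℕ+ → ℝ) (hfmono : Monotone f) (hfpos : ∀ n, 0 < f n)
    (hgmono : Monotone g) (hgpos : ∀ n, 0 < g n)
    (hCg : Summable fun n : ℕ+ => 1 / g n)
    (R S : ℕ+ → ℕ+ → A)
    (hRf : WFinite f R) (hRg : WFinite g R)
    (hSf : WFinite f S) (hSg : WFinite g S) :
    (∀ i j : ℕ+, Summable fun k : ℕ+ => ‖R i k‖ * ‖S k j‖) ∧
    WFinite f (matMul R S) := by
  obtain ⟨MRf, hMRf⟩ := hRf
  obtain ⟨MRg, hMRg⟩ := hRg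
  obtain ⟨MSf, hMSf⟩ := hSf
  obtain ⟨MSg, hMSg⟩ := hSg
  have hRf' : ∀ i j : ℕ+, f (max i j) * ‖R i j‖ ≤ MRf :=
    fun i j => hMRf (Set.mem_range_self (i, j))
  have hRg' : ∀ i j : ℕ+, g (max i j) * ‖R i j‖ ≤ MRg :=
    fun i j => hMRg (Set.mem_range_self (i, j))
  have hSf' : ∀ i j : ℕ+, f (max i j) * ‖S i j‖ ≤ MSf :=
    fun i j => hMSf (Set.mem_range_self (i, j))
  have hSg' : ∀ i j : ℕ+, g (max i j) * ‖S i j‖ ≤ MSg :=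
    fun i j => hMSg (Set.mem_range_self (i, j))
  set K : ℝ := max (MRf * MSg) (MRg * MSf) with hK
  -- the key pointwise estimate
  have key : ∀ i j k : ℕ+, f (max i j) * (‖R i k‖ * ‖S k j‖) ≤ K * (1 / g k) := by
    intro i j k
    rcases le_total j i with h | h
    · -- f on R, g on S
      have hmax : max i j ≤ max i k := max_le (le_max_left _ _) (h.trans (le_max_left _ _))
      have h1 : f (max i j) * ‖R i k‖ ≤ MRf :=
        le_trans (mul_le_mul_of_nonneg_right (hfmono hmax) (norm_nonneg _)) (hRf' i k)
      have h2 : ‖S k j‖ ≤ MSg * (1 / g k) := by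
        have hg : g k * ‖S k j‖ ≤ MSg :=
          le_trans (mul_le_mul_of_nonneg_right (hgmono (le_max_left k j)) (norm_nonneg _))
            (hSg' k j)
        rw [mul_one_div, le_div_iff₀ (hgpos k), mul_comm]
        exact hg
      have hR0 : 0 ≤ MRf := le_trans (mul_nonneg (hfpos _).le (norm_nonneg _)) (hRf' 1 1)
      calc f (max i j) * (‖R i k‖ * ‖S k j‖)
          = (f (max i j) * ‖R i k‖) * ‖S k j‖ := by ring
        _ ≤ MRf * (MSg * (1 / g k)) := by
            apply mul_le_mul h1 h2 (norm_nonneg _) hR0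
        _ = (MRf * MSg) * (1 / g k) := by ring
        _ ≤ K * (1 / g k) := by
            exact mul_le_mul_of_nonneg_right (le_max_left _ _)
              (one_div_nonneg.mpr (hgpos k).le)
    · -- g on R, f on S
      have hmax : max i j ≤ max k j := max_le (h.trans (le_max_right _ _)) (le_max_right _ _)
      have h2 : f (max i j) * ‖S k j‖ ≤ MSf :=
        le_trans (mul_le_mul_of_nonneg_right (hfmono hmax) (norm_nonneg _)) (hSf' k j)
      have h1 : ‖R i k‖ ≤ MRg * (1 / g k) := by
        have hg : g k * ‖R i k‖ ≤ MRg :=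
          le_trans (mul_le_mul_of_nonneg_right (hgmono (le_max_right i k)) (norm_nonneg _))
            (hRg' i k)
        rw [mul_one_div, le_div_iff₀ (hgpos k), mul_comm]
        exact hg
      have hS0 : 0 ≤ MSf := le_trans (mul_nonneg (hfpos _).le (norm_nonneg _)) (hSf' 1 1)
      calc f (max i j) * (‖R i k‖ * ‖S k j‖)
          = (MRg * (1 / g k)) * (f (max i j) * ‖S k j‖) - (MRg * (1 / g k) - ‖R i k‖) * (f (max i j) * ‖S k j‖) := by ring
        _ ≤ (MRg * (1 / g k)) * MSf - 0 := by
            apply sub_le_sub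
            · apply mul_le_mul_of_nonneg_left h2
              exact le_trans (norm_nonneg _) h1
            · apply mul_nonneg (by linarith) (mul_nonneg (hfpos _).le (norm_nonneg _))
        _ = (MRg * MSf) * (1 / g k) := by ring
        _ ≤ K * (1 / g k) := by
            exact mul_le_mul_of_nonneg_right (le_max_right _ _)
              (one_div_nonneg.mpr (hgpos k).le)
  -- summability of ‖R i k‖ * ‖S k j‖
  have hsum : ∀ i j : ℕ+, Summable fun k : ℕ+ => ‖R i k‖ * ‖S k j‖ := by
    intro i j
    refine Summable.of_nonneg_of_le
      (fun k => mul_nonneg (norm_nonneg _) (norm_nonneg _))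
      (fun k => ?_) ((hCg.mul_left K).div_const (f (max i j)))
    rw [le_div_iff₀ (hfpos _), mul_comm]
    exact key i j k
  refine ⟨hsum, ?_⟩
  -- bound on the product
  refine ⟨K * ∑' k : ℕ+, 1 / g k, ?_⟩
  rintro x ⟨⟨i, j⟩, rfl⟩
  simp only
  have hnorm : Summable fun k : ℕ+ => ‖R i k * S k j‖ :=
    Summable.of_nonneg_of_le (fun k => norm_nonneg _) (fun k => norm_mul_le _ _) (hsum i j)
  calc f (max i j) * ‖matMul R S i j‖
      ≤ f (max i j) * ∑' k : ℕ+, ‖R i k * S k j‖ := by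
        apply mul_le_mul_of_nonneg_left (norm_tsum_le_tsum_norm hnorm) (hfpos _).le
    _ ≤ f (max i j) * ∑' k : ℕ+, ‖R i k‖ * ‖S k j‖ := by
        apply mul_le_mul_of_nonneg_left _ (hfpos _).le
        exact Summable.tsum_le_tsum (fun k => norm_mul_le _ _) hnorm (hsum i j)
    _ = ∑' k : ℕ+, f (max i j) * (‖R i k‖ * ‖S k j‖) := (tsum_mul_left).symm
    _ ≤ ∑' k : ℕ+, K * (1 / g k) :=
        Summable.tsum_le_tsum (fun k => key i j k) ((hsum i j).mul_left _) (hCg.mul_left K)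
    _ = K * ∑' k : ℕ+, 1 / g k := tsum_mul_left
end

section
/- Let R = (r_{ij}) and S = (s_{ij}) be matrices with entries in A, let f and g be monotonically increasing weight functions with C_g = ∑_{n=1}^∞ 1/g(n) < ∞, and suppose ‖R‖_f, ‖R‖_g, ‖S‖_f, ‖S‖_g are all finite. Then ‖RS‖_f ≤ C_g · max(‖R‖_f·‖S‖_g, ‖R‖_g·‖S‖_f). -/
lemma wnorm_entry_le {A : Type*} [NonUnitalNormedRing A]
    (f : ℕ+ → ℝ) (T : ℕ+ → ℕ+ → A) (h : WFinite f T) (i j : ℕ+) :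
    f (max i j) * ‖T i j‖ ≤ wnorm f T :=
  le_csSup h ⟨(i, j), rfl⟩

lemma wnorm_nonneg {A : Type*} [NonUnitalNormedRing A]
    (f : ℕ+ → ℝ) (hfpos : ∀ n, 0 < f n) (T : ℕ+ → ℕ+ → A) (h : WFinite f T) :
    0 ≤ wnorm f T :=
  le_trans (mul_nonneg (hfpos _).le (norm_nonneg _)) (wnorm_entry_le f T h 1 1)

/-- If `f, g` are monotone weights with `C_g = ∑ 1/g(n) < ∞` and
`‖R‖_f, ‖R‖_g, ‖S‖_f, ‖S‖_g` are all finite, then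
`‖RS‖_f ≤ C_g · max(‖R‖_f·‖S‖_g, ‖R‖_g·‖S‖_f)`. -/
theorem matMul_wnorm_le
    {A : Type*} [NonUnitalNormedRing A] [CompleteSpace A]
    (f g : ℕ+ → ℝ) (hfmono : Monotone f) (hfpos : ∀ n, 0 < f n)
    (hgmono : Monotone g) (hgpos : ∀ n, 0 < g n)
    (hCg : Summable fun n : ℕ+ => 1 / g n)
    (R S : ℕ+ → ℕ+ → A)
    (hRf : WFinite f R) (hRg : WFinite g R)
    (hSf : WFinite f S) (hSg : WFinite g S) :
    wnorm f (matMul R S) ≤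
      (∑' n : ℕ+, 1 / g n) * max (wnorm f R * wnorm g S) (wnorm g R * wnorm f S) := by
  set M : ℝ := max (wnorm f R * wnorm g S) (wnorm g R * wnorm f S) with hM
  have hM0 : 0 ≤ M := le_trans (mul_nonneg (wnorm_nonneg f hfpos R hRf)
    (wnorm_nonneg g hgpos S hSg)) (le_max_left _ _)
  -- key termwise bound
  have key : ∀ i j k : ℕ+, f (max i j) * ‖R i k * S k j‖ ≤ (1 / g k) * M := by
    intro i j k
    have h1 : f (max i j) * ‖R i k * S k j‖ ≤ f (max i j) * (‖R i k‖ * ‖S k j‖) :=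
      mul_le_mul_of_nonneg_left (norm_mul_le _ _) (hfpos _).le
    refine h1.trans ?_
    rcases le_or_gt j (max i k) with hc | hc
    · -- max i j ≤ max i k
      have hmax : max i j ≤ max i k := max_le (le_max_left _ _) hc
      have hR : f (max i j) * ‖R i k‖ ≤ wnorm f R :=
        le_trans (mul_le_mul_of_nonneg_right (hfmono hmax) (norm_nonneg _))
          (wnorm_entry_le f R hRf i k)
      have hS : g k * ‖S k j‖ ≤ wnorm g S :=
        le_trans (mul_le_mul_of_nonneg_right (hgmono (le_max_left k j)) (norm_nonneg _))
          (wnorm_entry_le g S hSg k j)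
      have hSle : ‖S k j‖ ≤ wnorm g S / g k := by
        rw [le_div_iff₀ (hgpos k)]; linarith [hS]
      calc f (max i j) * (‖R i k‖ * ‖S k j‖)
          = (f (max i j) * ‖R i k‖) * ‖S k j‖ := by ring
        _ ≤ wnorm f R * (wnorm g S / g k) := by
            apply mul_le_mul hR hSle (norm_nonneg _)
            exact wnorm_nonneg f hfpos R hRf
        _ = (1 / g k) * (wnorm f R * wnorm g S) := by ring
        _ ≤ (1 / g k) * M :=
            mul_le_mul_of_nonneg_left (le_max_left _ _) (one_div_nonneg.mpr (hgpos k).le)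
    · -- j > max i k, so max i j = j = max k j
      have hij : max i j = j := max_eq_right ((le_max_left i k).trans hc.le)
      have hkj : max k j = j := max_eq_right ((le_max_right i k).trans hc.le)
      have hS : f (max i j) * ‖S k j‖ ≤ wnorm f S := by
        have h := wnorm_entry_le f S hSf k j
        rw [hkj] at h; rw [hij]; exact h
      have hR : g k * ‖R i k‖ ≤ wnorm g R :=
        le_trans (mul_le_mul_of_nonneg_right (hgmono (le_max_right i k)) (norm_nonneg _))
          (wnorm_entry_le g R hRg i k)
      have hRle : ‖R i k‖ ≤ wnorm g R / g k := by
        rw [le_div_iff₀ (hgpos k)]; linarith [hR]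
      calc f (max i j) * (‖R i k‖ * ‖S k j‖)
          = ‖R i k‖ * (f (max i j) * ‖S k j‖) := by ring
        _ ≤ (wnorm g R / g k) * wnorm f S :=
            mul_le_mul hRle hS (mul_nonneg (hfpos _).le (norm_nonneg _))
              (div_nonneg (wnorm_nonneg g hgpos R hRg) (hgpos k).le)
        _ = (1 / g k) * (wnorm g R * wnorm f S) := by ring
        _ ≤ (1 / g k) * M :=
            mul_le_mul_of_nonneg_left (le_max_right _ _) (one_div_nonneg.mpr (hgpos k).le)
  -- summability of the norms
  have hsum : ∀ i j : ℕ+, Summable fun k : ℕ+ => ‖R i k * S k j‖ := by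
    intro i j
    apply Summable.of_nonneg_of_le (fun k => norm_nonneg _)
      (fun k => ?_) ((hCg.mul_right (M / f (max i j))))
    have := key i j k
    rw [← le_div_iff₀' (hfpos (max i j))] at this
    calc ‖R i k * S k j‖ ≤ 1 / g k * M / f (max i j) := this
      _ = 1 / g k * (M / f (max i j)) := by ring
  -- bound each entry of the product
  have entry : ∀ i j : ℕ+, f (max i j) * ‖matMul R S i j‖ ≤ (∑' n : ℕ+, 1 / g n) * M := by
    intro i j
    have h1 : ‖matMul R S i j‖ ≤ ∑' k : ℕ+, ‖R i k * S k j‖ :=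
      norm_tsum_le_tsum_norm (hsum i j)
    have h2 : f (max i j) * ‖matMul R S i j‖ ≤ ∑' k : ℕ+, f (max i j) * ‖R i k * S k j‖ := by
      rw [tsum_mul_left]
      exact mul_le_mul_of_nonneg_left h1 (hfpos _).le
    refine h2.trans ?_
    rw [← tsum_mul_right]
    exact Summable.tsum_le_tsum (fun k => key i j k)
      ((hsum i j).mul_left _) (hCg.mul_right M)
  -- conclude with sSup
  apply Real.sSup_le
  · rintro x ⟨⟨i, j⟩, rfl⟩
    exact entry i j
  · exact mul_nonneg (tsum_nonneg fun n => one_div_nonneg.mpr (hgpos n).le) hM0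
end

section
/- Let R = (r_{ij}), S = (s_{ij}), T = (t_{ij}) be matrices with entries in A, let f and g be monotonically increasing weight functions with C_g = ∑_{n=1}^∞ 1/g(n) < ∞, and suppose ‖R‖_f, ‖R‖_g, ‖S‖_f, ‖S‖_g, ‖T‖_f, ‖T‖_g are all finite. Then for each fixed i, j ∈ ℕ the double family (‖r_{iℓ}‖·‖s_{ℓk}‖·‖t_{kj}‖)_{(k,ℓ)∈ℕ×ℕ} is summable, i.e. ∑_{(k,ℓ)∈ℕ×ℕ} ‖r_{iℓ}‖·‖s_{ℓk}‖·‖t_{kj}‖ < ∞. -/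
lemma wfinite_bound {A : Type*} [NonUnitalNormedRing A]
    {g : ℕ+ → ℝ} (hgmono : Monotone g) (hgpos : ∀ n, 0 < g n)
    {T : ℕ+ → ℕ+ → A} (h : WFinite g T) :
    ∃ C : ℝ, 0 ≤ C ∧ (∀ i j : ℕ+, ‖T i j‖ ≤ C / g i) ∧ (∀ i j : ℕ+, ‖T i j‖ ≤ C / g j) := by
  obtain ⟨C, hC⟩ := h
  have hC' : ∀ i j : ℕ+, g (max i j) * ‖T i j‖ ≤ C := by
    intro i j
    exact hC (Set.mem_range_self (i, j))
  have hC0 : 0 ≤ C := le_trans (mul_nonneg (hgpos _).le (norm_nonneg _)) (hC' 1 1)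
  refine ⟨C, hC0, ?_, ?_⟩
  · intro i j
    rw [le_div_iff₀ (hgpos i)]
    calc ‖T i j‖ * g i ≤ ‖T i j‖ * g (max i j) :=
          mul_le_mul_of_nonneg_left (hgmono (le_max_left i j)) (norm_nonneg _)
      _ = g (max i j) * ‖T i j‖ := mul_comm _ _
      _ ≤ C := hC' i j
  · intro i j
    rw [le_div_iff₀ (hgpos j)]
    calc ‖T i j‖ * g j ≤ ‖T i j‖ * g (max i j) :=
          mul_le_mul_of_nonneg_left (hgmono (le_max_right i j)) (norm_nonneg _)
      _ = g (max i j) * ‖T i j‖ := mul_comm _ _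
      _ ≤ C := hC' i j

/-- For matrices `R, S, T` with all weighted norms w.r.t. `f` and `g` finite,
where `C_g = ∑ 1/g(n) < ∞`, the double family `(‖r_{iℓ}‖·‖s_{ℓk}‖·‖t_{kj}‖)_{(k,ℓ)∈ℕ×ℕ}`
is summable for each fixed `i, j`. -/
theorem triple_summable
    {A : Type*} [NonUnitalNormedRing A] [CompleteSpace A]
    (f g : ℕ+ → ℝ) (hfmono : Monotone f) (hfpos : ∀ n, 0 < f n)
    (hgmono : Monotone g) (hgpos : ∀ n, 0 < g n)
    (hCg : Summable fun n : ℕ+ => 1 / g n)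
    (R S T : ℕ+ → ℕ+ → A)
    (hRf : WFinite f R) (hRg : WFinite g R)
    (hSf : WFinite f S) (hSg : WFinite g S)
    (hTf : WFinite f T) (hTg : WFinite g T) :
    ∀ i j : ℕ+,
      Summable fun p : ℕ+ × ℕ+ => ‖R i p.2‖ * ‖S p.2 p.1‖ * ‖T p.1 j‖ := by
  intro i j
  obtain ⟨CR, hCR0, _, hR⟩ := wfinite_bound hgmono hgpos hRg
  obtain ⟨CS, hCS0, hS, _⟩ := wfinite_bound hgmono hgpos hSg
  obtain ⟨CT, hCT0, hT, _⟩ := wfinite_bound hgmono hgpos hTg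
  -- ‖S ℓ k‖ ≤ CS / g ℓ ≤ CS / g 1
  have hS1 : ∀ a b : ℕ+, ‖S a b‖ ≤ CS / g 1 := by
    intro a b
    refine le_trans (hS a b) ?_
    exact div_le_div_of_nonneg_left hCS0 (hgpos 1) (hgmono a.one_le)
  have hsum : Summable fun p : ℕ+ × ℕ+ =>
      (CT / g p.1) * ((CR / g p.2) * (CS / g 1)) := by
    have h1 : Summable fun n : ℕ+ => CT / g n := by
      simpa [div_eq_mul_inv, one_div, mul_assoc] using hCg.mul_left CT
    have h2 : Summable fun n : ℕ+ => (CR / g n) * (CS / g 1) := by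
      have := hCg.mul_left CR
      simpa [div_eq_mul_inv, one_div, mul_assoc] using this.mul_right (CS / g 1)
    exact h1.mul_of_nonneg h2 (fun n => div_nonneg hCT0 (hgpos _).le) (fun n => mul_nonneg (div_nonneg hCR0 (hgpos _).le) (div_nonneg hCS0 (hgpos _).le))
  refine hsum.of_nonneg_of_le (fun p => by positivity) ?_
  intro p
  have h1 : ‖R i p.2‖ ≤ CR / g p.2 := hR i p.2
  have h2 : ‖S p.2 p.1‖ ≤ CS / g 1 := hS1 p.2 p.1
  have h3 : ‖T p.1 j‖ ≤ CT / g p.1 := hT p.1 j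
  calc ‖R i p.2‖ * ‖S p.2 p.1‖ * ‖T p.1 j‖
      ≤ (CR / g p.2) * (CS / g 1) * (CT / g p.1) := by
        apply mul_le_mul (mul_le_mul h1 h2 (norm_nonneg _) (div_nonneg hCR0 (hgpos _).le)) h3
          (norm_nonneg _) (mul_nonneg (div_nonneg hCR0 (hgpos _).le) (div_nonneg hCS0 (hgpos _).le))
    _ = (CT / g p.1) * ((CR / g p.2) * (CS / g 1)) := by ring
end

section
/- Let f be a monotonically increasing weight function with C_f = ∑_{n=1}^∞ 1/f(n) < ∞, and let R, S be matrices with entries in A such that ‖R‖_f < ∞ and ‖S‖_f < ∞. Then the matrix product RS is well-defined (entrywise absolutely convergent) and satisfies ‖RS‖_f ≤ C_f · ‖R‖_f · ‖S‖_f. -/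
/-!
Since `f` is monotone, `f (max i j) * f k ≤ f (max i k) * f (max k j)` for all indices: the
larger of `max i k` and `max k j` dominates `max i j`, and the other one dominates `k`.
Hence `f (max i j) * ‖r_{ik}‖ * ‖s_{kj}‖ ≤ ‖R‖_f * ‖S‖_f / f k`, and summing over `k` gives
both the absolute convergence of `(RS)_{ij}` and the bound `C_f * ‖R‖_f * ‖S‖_f`.
-/

theorem Monotone.apply_max_mul_apply_le {α : Type*} [LinearOrder α] {f : α → ℝ}
    (hf : Monotone f) (hf0 : ∀ a, 0 ≤ f a) (i j k : α) :
    f (max i j) * f k ≤ f (max i k) * f (max k j) := by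
  rcases le_total (max i k) (max k j) with h | h
  · have hij : max i j ≤ max k j := max_le ((le_max_left i k).trans h) (le_max_right k j)
    calc f (max i j) * f k ≤ f (max k j) * f (max i k) :=
          mul_le_mul (hf hij) (hf (le_max_right i k)) (hf0 k) (hf0 _)
      _ = f (max i k) * f (max k j) := mul_comm _ _
  · have hij : max i j ≤ max i k := max_le (le_max_left i k) ((le_max_right k j).trans h)
    exact mul_le_mul (hf hij) (hf (le_max_left k j)) (hf0 k) (hf0 _)

section WeightedNorm

variable {A : Type*} [NonUnitalNormedRing A] {f : ℕ+ → ℝ}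

theorem apply_max_mul_norm_le_wnorm {T : ℕ+ → ℕ+ → A} (hT : WFinite f T) (i j : ℕ+) :
    f (max i j) * ‖T i j‖ ≤ wnorm f T :=
  le_csSup hT ⟨(i, j), rfl⟩

theorem wnorm_le {T : ℕ+ → ℕ+ → A} {M : ℝ} (hM : ∀ i j, f (max i j) * ‖T i j‖ ≤ M) :
    wnorm f T ≤ M :=
  csSup_le (Set.range_nonempty _) (by rintro _ ⟨⟨i, j⟩, rfl⟩; exact hM i j)

theorem norm_mul_norm_le_wnorm_mul_wnorm (hfmono : Monotone f) (hfpos : ∀ n, 0 < f n)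
    {R S : ℕ+ → ℕ+ → A} (hRf : WFinite f R) (hSf : WFinite f S) (i j k : ℕ+) :
    ‖R i k‖ * ‖S k j‖ ≤ wnorm f R * wnorm f S / f (max i j) * (1 / f k) := by
  have hR := apply_max_mul_norm_le_wnorm hRf i k
  have hS := apply_max_mul_norm_le_wnorm hSf k j
  have hweight := hfmono.apply_max_mul_apply_le (fun n => (hfpos n).le) i j k
  have hij := hfpos (max i j)
  have hk := hfpos k
  rw [div_mul_div_comm, mul_one, le_div_iff₀ (by positivity)]
  calc ‖R i k‖ * ‖S k j‖ * (f (max i j) * f k)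
      ≤ ‖R i k‖ * ‖S k j‖ * (f (max i k) * f (max k j)) := by gcongr
    _ = (f (max i k) * ‖R i k‖) * (f (max k j) * ‖S k j‖) := by ring
    _ ≤ wnorm f R * wnorm f S :=
        mul_le_mul hR hS (mul_nonneg (hfpos _).le (norm_nonneg _))
          ((mul_nonneg (hfpos _).le (norm_nonneg _)).trans hR)

theorem norm_matMul_le {R S : ℕ+ → ℕ+ → A} {i j : ℕ+}
    (h : Summable fun k => ‖R i k‖ * ‖S k j‖) :
    ‖matMul R S i j‖ ≤ ∑' k, ‖R i k‖ * ‖S k j‖ :=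
  tsum_of_norm_bounded h.hasSum fun _ => norm_mul_le _ _

end WeightedNorm

theorem matMul_wnorm_single_weight_general
    {A : Type*} [NonUnitalNormedRing A]
    (f : ℕ+ → ℝ) (hfmono : Monotone f) (hfpos : ∀ n, 0 < f n)
    (hCf : Summable fun n : ℕ+ => 1 / f n)
    (R S : ℕ+ → ℕ+ → A)
    (hRf : WFinite f R) (hSf : WFinite f S) :
    (∀ i j : ℕ+, Summable fun k : ℕ+ => ‖R i k‖ * ‖S k j‖) ∧
    wnorm f (matMul R S) ≤ (∑' n : ℕ+, 1 / f n) * wnorm f R * wnorm f S := by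
  have hbound := norm_mul_norm_le_wnorm_mul_wnorm hfmono hfpos hRf hSf
  have hsum : ∀ i j : ℕ+, Summable fun k : ℕ+ => ‖R i k‖ * ‖S k j‖ := fun i j =>
    (hCf.mul_left _).of_nonneg_of_le (fun k => by positivity) (hbound i j)
  refine ⟨hsum, wnorm_le fun i j => ?_⟩
  have hij := (hfpos (max i j)).ne'
  calc f (max i j) * ‖matMul R S i j‖
      ≤ f (max i j) * ∑' k, ‖R i k‖ * ‖S k j‖ :=
        mul_le_mul_of_nonneg_left (norm_matMul_le (hsum i j)) (hfpos _).le
    _ ≤ f (max i j) * ∑' k, wnorm f R * wnorm f S / f (max i j) * (1 / f k) :=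
        mul_le_mul_of_nonneg_left
          ((hsum i j).tsum_le_tsum (hbound i j) (hCf.mul_left _)) (hfpos _).le
    _ = (∑' n : ℕ+, 1 / f n) * wnorm f R * wnorm f S := by
        rw [tsum_mul_left]
        field_simp

/-- If `f` is a monotone weight with `C_f = ∑ 1/f(n) < ∞` and
`‖R‖_f, ‖S‖_f < ∞`, then `RS` is well defined (entrywise absolutely convergent)
and `‖RS‖_f ≤ C_f · ‖R‖_f · ‖S‖_f`. -/
theorem matMul_wnorm_single_weight
    {A : Type*} [NonUnitalNormedRing A] [CompleteSpace A]
    (f : ℕ+ → ℝ) (hfmono : Monotone f) (hfpos : ∀ n, 0 < f n)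
    (hCf : Summable fun n : ℕ+ => 1 / f n)
    (R S : ℕ+ → ℕ+ → A)
    (hRf : WFinite f R) (hSf : WFinite f S) :
    (∀ i j : ℕ+, Summable fun k : ℕ+ => ‖R i k‖ * ‖S k j‖) ∧
    wnorm f (matMul R S) ≤ (∑' n : ℕ+, 1 / f n) * wnorm f R * wnorm f S :=
  matMul_wnorm_single_weight_general f hfmono hfpos hCf R S hRf hSf
end

section
/- Let f be a monotonically increasing weight function with C_f = ∑_{n=1}^∞ 1/f(n) < ∞, and let h := C_f · f (so h(n) = C_f · f(n)). Then C_h = 1, the norm ‖·‖_h equals C_f·‖·‖_f (hence is equivalent to ‖·‖_f), and ‖·‖_h is submultiplicative for the matrix product: for all matrices R, S with entries in A satisfying ‖R‖_f < ∞ and ‖S‖_f < ∞, one has ‖RS‖_h ≤ ‖R‖_h · ‖S‖_h. -/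
/-- Let `f` be a monotone weight with `C_f = ∑ 1/f(n) < ∞` and
`h := C_f · f`. Then `C_h = 1`, the norm `‖·‖_h` equals `C_f·‖·‖_f`, and `‖·‖_h` is
submultiplicative: `‖RS‖_h ≤ ‖R‖_h·‖S‖_h` whenever `‖R‖_f, ‖S‖_f < ∞`. -/
theorem rescaled_weight_submultiplicative
    {A : Type*} [NonUnitalNormedRing A] [CompleteSpace A]
    (f : ℕ+ → ℝ) (hfmono : Monotone f) (hfpos : ∀ n, 0 < f n)
    (hCf : Summable fun n : ℕ+ => 1 / f n)
    (h : ℕ+ → ℝ) (hh : h = fun n => (∑' m : ℕ+, 1 / f m) * f n) :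
    (∑' n : ℕ+, 1 / h n) = 1 ∧
    (∀ T : ℕ+ → ℕ+ → A, wnorm h T = (∑' m : ℕ+, 1 / f m) * wnorm f T) ∧
    (∀ R S : ℕ+ → ℕ+ → A, WFinite f R → WFinite f S →
      wnorm h (matMul R S) ≤ wnorm h R * wnorm h S) := by
  set C := ∑' m : ℕ+, 1 / f m with hCdef
  have hC : 0 < C := Summable.tsum_pos hCf (fun n => (one_div_pos.mpr (hfpos n)).le) 1
    (one_div_pos.mpr (hfpos 1))
  -- Part 2 first, as a `have`.
  have key2 : ∀ T : ℕ+ → ℕ+ → A, wnorm h T = C * wnorm f T := by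
    intro T
    unfold wnorm
    rw [← iSup, ← iSup, Real.mul_iSup_of_nonneg hC.le]
    congr 1
    funext p
    rw [hh]
    ring
  refine ⟨?_, fun T => key2 T, ?_⟩
  · have : (fun n : ℕ+ => 1 / h n) = fun n => C⁻¹ * (1 / f n) := by
      funext n
      rw [hh]
      field_simp
    rw [this, tsum_mul_left, ← hCdef, inv_mul_cancel₀ hC.ne']
  · intro R S hR hS
    set NR := wnorm f R with hNRdef
    set NS := wnorm f S with hNSdef
    have hRb : ∀ i k : ℕ+, f (max i k) * ‖R i k‖ ≤ NR := fun i k =>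
      le_csSup hR ⟨(i, k), rfl⟩
    have hSb : ∀ k j : ℕ+, f (max k j) * ‖S k j‖ ≤ NS := fun k j =>
      le_csSup hS ⟨(k, j), rfl⟩
    have hNR : 0 ≤ NR := le_trans (mul_nonneg (hfpos _).le (norm_nonneg _)) (hRb 1 1)
    have hNS : 0 ≤ NS := le_trans (mul_nonneg (hfpos _).le (norm_nonneg _)) (hSb 1 1)
    -- key weight inequality
    have hkey : ∀ i j k : ℕ+, f (max i j) * f k ≤ f (max i k) * f (max k j) := by
      intro i j k
      rcases le_total i j with hij | hij
      · calc f (max i j) * f k ≤ f (max k j) * f (max i k) :=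
              mul_le_mul (hfmono (max_le (hij.trans (le_max_right k j)) (le_max_right k j)))
                (hfmono (le_max_right i k)) (hfpos k).le (hfpos _).le
          _ = f (max i k) * f (max k j) := mul_comm _ _
      · exact mul_le_mul (hfmono (max_le (le_max_left i k) (hij.trans (le_max_left i k))))
          (hfmono (le_max_left k j)) (hfpos k).le (hfpos _).le
    -- entrywise bound on the product
    have hentry : ∀ i j : ℕ+, ‖matMul R S i j‖ ≤ NR * NS / f (max i j) * C := by
      intro i j
      have hRk : ∀ k : ℕ+, ‖R i k‖ ≤ NR / f (max i k) := fun k =>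
        (le_div_iff₀ (hfpos _)).mpr (by rw [mul_comm]; exact hRb i k)
      have hSk : ∀ k : ℕ+, ‖S k j‖ ≤ NS / f (max k j) := fun k =>
        (le_div_iff₀ (hfpos _)).mpr (by rw [mul_comm]; exact hSb k j)
      have hptwise : ∀ k : ℕ+, ‖R i k * S k j‖ ≤ NR * NS / f (max i j) * (1 / f k) := by
        intro k
        calc ‖R i k * S k j‖ ≤ ‖R i k‖ * ‖S k j‖ := norm_mul_le _ _
          _ ≤ (NR / f (max i k)) * (NS / f (max k j)) :=
              mul_le_mul (hRk k) (hSk k) (norm_nonneg _)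
                (div_nonneg hNR (hfpos _).le)
          _ = NR * NS / (f (max i k) * f (max k j)) := by
              rw [div_mul_div_comm]
          _ ≤ NR * NS / (f (max i j) * f k) := by
              exact div_le_div_of_nonneg_left (mul_nonneg hNR hNS)
                (mul_pos (hfpos _) (hfpos _)) (hkey i j k)
          _ = NR * NS / f (max i j) * (1 / f k) := by
              rw [mul_one_div, div_div]
      have hmaj : Summable fun k : ℕ+ => NR * NS / f (max i j) * (1 / f k) :=
        hCf.mul_left _
      have hsum : Summable fun k : ℕ+ => ‖R i k * S k j‖ :=
        Summable.of_nonneg_of_le (fun k => norm_nonneg _) hptwise hmaj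
      calc ‖matMul R S i j‖ ≤ ∑' k : ℕ+, ‖R i k * S k j‖ :=
              norm_tsum_le_tsum_norm hsum
        _ ≤ ∑' k : ℕ+, NR * NS / f (max i j) * (1 / f k) :=
              Summable.tsum_le_tsum hptwise hsum hmaj
        _ = NR * NS / f (max i j) * C := by rw [tsum_mul_left]
    -- conclude
    rw [key2 (matMul R S), key2 R, key2 S, ← hNRdef, ← hNSdef]
    have hbound : wnorm f (matMul R S) ≤ NR * NS * C := by
      apply Real.sSup_le _ (by positivity)
      rintro x ⟨⟨i, j⟩, rfl⟩
      simp only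
      calc f (max i j) * ‖matMul R S i j‖
          ≤ f (max i j) * (NR * NS / f (max i j) * C) :=
            mul_le_mul_of_nonneg_left (hentry i j) (hfpos _).le
        _ = NR * NS * C := by
            have hne := (hfpos (max i j)).ne'
            field_simp
    calc C * wnorm f (matMul R S) ≤ C * (NR * NS * C) :=
          mul_le_mul_of_nonneg_left hbound hC.le
      _ = C * NR * (C * NS) := by ring
end

section
/- Let f and g be monotonically increasing weight functions with C_g = ∑_{n=1}^∞ 1/g(n) < ∞, and let T be a matrix with entries in A such that ‖T‖_f < ∞ and ‖T‖_g < ∞. Define powers by T^1 := T and T^{n+1} := T^n · T using the entrywise matrix product. Then for every n ∈ ℕ, n ≥ 1, one has ‖T^n‖_f ≤ (C_g·‖T‖_g)^{n-1} · ‖T‖_f. -/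
/-- Matrix powers: `matPow T n` is `T^(n+1)`, i.e. `matPow T 0 = T = T^1` and
`matPow T (n+1) = (matPow T n) · T = T^(n+2)`. -/
noncomputable def matPow {A : Type*} [NonUnitalNormedRing A]
    (T : ℕ+ → ℕ+ → A) : ℕ → (ℕ+ → ℕ+ → A)
  | 0 => T
  | n + 1 => matMul (matPow T n) T

/-!
For each middle index `k`, one of `max(i,k)`, `max(k,j)` dominates `max(i,j)` and both dominate
`k`, so by monotonicity `f(max(i,j)) g(k)` is at most a `g`-weight of one factor of
`r_{ik} s_{kj}` times an `f`-weight of the other. Dividing by `g(k)` and summing over `k` gives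
`‖RS‖_f ≤ C_g · max(‖R‖_g‖S‖_f, ‖R‖_f‖S‖_g)`; applying this to `R = T^n`, `S = T` for both
weights `f` and `g` at once yields the bound by induction on `n`.
-/

section WeightedBound

variable {A : Type*} [NonUnitalNormedRing A]

def WeightedBound (f : ℕ+ → ℝ) (T : ℕ+ → ℕ+ → A) (B : ℝ) : Prop :=
  ∀ i j, f (max i j) * ‖T i j‖ ≤ B

variable {f g : ℕ+ → ℝ} {T P : ℕ+ → ℕ+ → A} {B B' : ℝ}

theorem WFinite.weightedBound (h : WFinite f T) : WeightedBound f T (wnorm f T) :=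
  fun i j => le_csSup h ⟨(i, j), rfl⟩

theorem wnorm_le_of_weightedBound (h : WeightedBound f T B) : wnorm f T ≤ B :=
  csSup_le (Set.range_nonempty _) <| by
    rintro _ ⟨⟨i, j⟩, rfl⟩
    exact h i j

theorem WeightedBound.mono (h : WeightedBound f T B) (hB : B ≤ B') : WeightedBound f T B' :=
  fun i j => (h i j).trans hB

theorem WeightedBound.nonneg (hf : ∀ n, 0 < f n) (h : WeightedBound f T B) : 0 ≤ B :=
  (mul_nonneg (hf 1).le (norm_nonneg _)).trans (h 1 1)

theorem weight_mul_le_or (hfmono : Monotone f) (hfpos : ∀ n, 0 < f n)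
    (hgmono : Monotone g) (hgpos : ∀ n, 0 < g n) (i k j : ℕ+) :
    f (max i j) * g k ≤ g (max i k) * f (max k j) ∨
      f (max i j) * g k ≤ f (max i k) * g (max k j) := by
  rcases le_total (max i k) (max k j) with h | h
  · left
    rw [mul_comm]
    exact mul_le_mul (hgmono (le_max_right i k))
      (hfmono (max_le ((le_max_left i k).trans h) (le_max_right k j)))
      (hfpos _).le (hgpos _).le
  · right
    exact mul_le_mul (hfmono (max_le (le_max_left i k) ((le_max_right k j).trans h)))
      (hgmono (le_max_left k j)) (hgpos _).le (hfpos _).le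

theorem weightedBound_matMul (hfmono : Monotone f) (hfpos : ∀ n, 0 < f n)
    (hgmono : Monotone g) (hgpos : ∀ n, 0 < g n) (hCg : Summable fun n : ℕ+ => 1 / g n)
    {Pf Pg Tf Tg : ℝ} (hPf : WeightedBound f P Pf) (hPg : WeightedBound g P Pg)
    (hTf : WeightedBound f T Tf) (hTg : WeightedBound g T Tg) :
    WeightedBound f (matMul P T) ((∑' m : ℕ+, 1 / g m) * max (Pg * Tf) (Pf * Tg)) := by
  intro i j
  set M := max (Pg * Tf) (Pf * Tg)
  have hF := hfpos (max i j)
  have hterm : ∀ k, f (max i j) * g k * ‖P i k * T k j‖ ≤ M := fun k => by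
    have hprod : f (max i j) * g k * (‖P i k‖ * ‖T k j‖) ≤ M := by
      rcases weight_mul_le_or hfmono hfpos hgmono hgpos i k j with h | h
      · calc f (max i j) * g k * (‖P i k‖ * ‖T k j‖)
            ≤ g (max i k) * f (max k j) * (‖P i k‖ * ‖T k j‖) := by gcongr
          _ = (g (max i k) * ‖P i k‖) * (f (max k j) * ‖T k j‖) := by ring
          _ ≤ Pg * Tf := mul_le_mul (hPg i k) (hTf k j) (by have := hfpos (max k j); positivity)
              (hPg.nonneg hgpos)
          _ ≤ M := le_max_left _ _
      · calc f (max i j) * g k * (‖P i k‖ * ‖T k j‖)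
            ≤ f (max i k) * g (max k j) * (‖P i k‖ * ‖T k j‖) := by gcongr
          _ = (f (max i k) * ‖P i k‖) * (g (max k j) * ‖T k j‖) := by ring
          _ ≤ Pf * Tg := mul_le_mul (hPf i k) (hTg k j) (by have := hgpos (max k j); positivity)
              (hPf.nonneg hfpos)
          _ ≤ M := le_max_right _ _
    have := hgpos k
    exact (mul_le_mul_of_nonneg_left (norm_mul_le _ _) (by positivity)).trans hprod
  have hnorm : ‖matMul P T i j‖ ≤ M / f (max i j) * ∑' m : ℕ+, 1 / g m := by
    refine tsum_of_norm_bounded (hCg.hasSum.mul_left (M / f (max i j))) fun k => ?_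
    have := hgpos k
    rw [div_mul_div_comm, mul_one, le_div_iff₀ (by positivity), mul_comm]
    exact hterm k
  calc f (max i j) * ‖matMul P T i j‖
      ≤ f (max i j) * (M / f (max i j) * ∑' m : ℕ+, 1 / g m) := by gcongr
    _ = (∑' m : ℕ+, 1 / g m) * M := by field_simp

theorem weightedBound_matPow (hgmono : Monotone g) (hgpos : ∀ n, 0 < g n)
    (hCg : Summable fun n : ℕ+ => 1 / g n) {Ng : ℝ} (hTg : WeightedBound g T Ng) (n : ℕ)
    {f : ℕ+ → ℝ} {Nf : ℝ} (hfmono : Monotone f) (hfpos : ∀ n, 0 < f n)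
    (hTf : WeightedBound f T Nf) :
    WeightedBound f (matPow T n) (((∑' m : ℕ+, 1 / g m) * Ng) ^ n * Nf) := by
  induction n generalizing f Nf with
  | zero => simpa [matPow] using hTf
  | succ n ih =>
    refine (weightedBound_matMul hfmono hfpos hgmono hgpos hCg (ih hfmono hfpos hTf)
      (ih hgmono hgpos hTg) hTf hTg).mono (le_of_eq ?_)
    rw [mul_right_comm _ Nf, max_self, pow_succ]
    ring

end WeightedBound

theorem matPow_wnorm_le_general
    {A : Type*} [NonUnitalNormedRing A]
    (f g : ℕ+ → ℝ) (hfmono : Monotone f) (hfpos : ∀ n, 0 < f n)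
    (hgmono : Monotone g) (hgpos : ∀ n, 0 < g n)
    (hCg : Summable fun n : ℕ+ => 1 / g n)
    (T : ℕ+ → ℕ+ → A)
    (hTf : WFinite f T) (hTg : WFinite g T) :
    ∀ n : ℕ, wnorm f (matPow T n) ≤ ((∑' m : ℕ+, 1 / g m) * wnorm g T) ^ n * wnorm f T :=
  fun n => wnorm_le_of_weightedBound <|
    weightedBound_matPow hgmono hgpos hCg hTg.weightedBound n hfmono hfpos hTf.weightedBound

/-- If `f, g` are monotone weights with `C_g = ∑ 1/g(n) < ∞` and
`‖T‖_f, ‖T‖_g < ∞`, then `‖T^n‖_f ≤ (C_g‖T‖_g)^(n-1)·‖T‖_f` for all `n ≥ 1`;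
here `matPow T n = T^(n+1)`, so the exponent is `n`. -/
theorem matPow_wnorm_le
    {A : Type*} [NonUnitalNormedRing A] [CompleteSpace A]
    (f g : ℕ+ → ℝ) (hfmono : Monotone f) (hfpos : ∀ n, 0 < f n)
    (hgmono : Monotone g) (hgpos : ∀ n, 0 < g n)
    (hCg : Summable fun n : ℕ+ => 1 / g n)
    (T : ℕ+ → ℕ+ → A)
    (hTf : WFinite f T) (hTg : WFinite g T) :
    ∀ n : ℕ, wnorm f (matPow T n) ≤ ((∑' m : ℕ+, 1 / g m) * wnorm g T) ^ n * wnorm f T :=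
  matPow_wnorm_le_general f g hfmono hfpos hgmono hgpos hCg T hTf hTg
end

section
/- Let f and g be monotonically increasing weight functions with C_g = ∑_{n=1}^∞ 1/g(n) < ∞, and let T be a matrix with entries in A such that ‖T‖_f < ∞, ‖T‖_g < ∞, and C_g·‖T‖_g < 1. With powers T^n defined by T^1 := T and T^{n+1} := T^n · T via the entrywise matrix product, the series of norms satisfies ∑_{n=1}^∞ ‖T^n‖_f ≤ ‖T‖_f / (1 − C_g·‖T‖_g) < ∞. -/
lemma core_bound {A : Type*} [NonUnitalNormedRing A] [CompleteSpace A]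
    (f g : ℕ+ → ℝ) (hfmono : Monotone f) (hfpos : ∀ n, 0 < f n)
    (hgmono : Monotone g) (hgpos : ∀ n, 0 < g n)
    (hCg : Summable fun n : ℕ+ => 1 / g n)
    (R T : ℕ+ → ℕ+ → A) (P Q Mf Mg : ℝ)
    (hRf : ∀ i j, f (max i j) * ‖R i j‖ ≤ P)
    (hRg : ∀ i j, g (max i j) * ‖R i j‖ ≤ Q)
    (hTf : ∀ i j, f (max i j) * ‖T i j‖ ≤ Mf)
    (hTg : ∀ i j, g (max i j) * ‖T i j‖ ≤ Mg)
    (hMg : 0 ≤ Mg) (hMf : 0 ≤ Mf) :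
    ∀ i j, f (max i j) * ‖matMul R T i j‖ ≤
      (∑' m : ℕ+, 1 / g m) * max (P * Mg) (Q * Mf) := by
  intro i j
  set D := max (P * Mg) (Q * Mf) with hD
  have hfij : 0 < f (max i j) := hfpos _
  -- per-term bound
  have key : ∀ k : ℕ+, ‖R i k * T k j‖ ≤ (1 / g k) * (D / f (max i j)) := by
    intro k
    have hgk : 0 < g k := hgpos k
    have hcase : max i j ≤ max i k ∨ max i j ≤ max k j := by
      rcases le_total (max i k) (max k j) with h | h
      · right
        exact le_trans (max_le (le_trans (le_max_left i k) h) (le_max_right k j)) le_rfl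
      · left
        exact max_le (le_max_left i k) (le_trans (le_max_right k j) h)
    have hnorm : ‖R i k * T k j‖ ≤ ‖R i k‖ * ‖T k j‖ := norm_mul_le _ _
    rcases hcase with h | h
    · -- use f-bound on R, g-bound on T
      have h1 : f (max i j) * ‖R i k‖ ≤ P :=
        le_trans (mul_le_mul_of_nonneg_right (hfmono h) (norm_nonneg _)) (hRf i k)
      have h2 : g k * ‖T k j‖ ≤ Mg :=
        le_trans (mul_le_mul_of_nonneg_right (hgmono (le_max_left k j)) (norm_nonneg _)) (hTg k j)
      have hPD : P * Mg ≤ D := le_max_left _ _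
      have : f (max i j) * (g k * ‖R i k * T k j‖) ≤ P * Mg := by
        calc f (max i j) * (g k * ‖R i k * T k j‖)
            ≤ f (max i j) * (g k * (‖R i k‖ * ‖T k j‖)) := by
              apply mul_le_mul_of_nonneg_left _ hfij.le
              exact mul_le_mul_of_nonneg_left hnorm hgk.le
          _ = (f (max i j) * ‖R i k‖) * (g k * ‖T k j‖) := by ring
          _ ≤ P * Mg := by
              apply mul_le_mul h1 h2 (mul_nonneg hgk.le (norm_nonneg _))
              exact le_trans (mul_nonneg hfij.le (norm_nonneg _)) h1
      have hfin := le_trans this hPD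
      rw [div_mul_eq_mul_div, one_mul, div_div, le_div_iff₀ (by positivity)]
      calc ‖R i k * T k j‖ * (f (i ⊔ j) * g k)
          = f (i ⊔ j) * (g k * ‖R i k * T k j‖) := by ring
        _ ≤ D := hfin
    · have h1 : g k * ‖R i k‖ ≤ Q :=
        le_trans (mul_le_mul_of_nonneg_right (hgmono (le_max_right i k)) (norm_nonneg _)) (hRg i k)
      have h2 : f (max i j) * ‖T k j‖ ≤ Mf :=
        le_trans (mul_le_mul_of_nonneg_right (hfmono h) (norm_nonneg _)) (hTf k j)
      have hQD : Q * Mf ≤ D := le_max_right _ _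
      have hgk : 0 < g k := hgpos k
      have : f (max i j) * (g k * ‖R i k * T k j‖) ≤ Q * Mf := by
        calc f (max i j) * (g k * ‖R i k * T k j‖)
            ≤ f (max i j) * (g k * (‖R i k‖ * ‖T k j‖)) := by
              apply mul_le_mul_of_nonneg_left _ hfij.le
              exact mul_le_mul_of_nonneg_left hnorm hgk.le
          _ = (g k * ‖R i k‖) * (f (max i j) * ‖T k j‖) := by ring
          _ ≤ Q * Mf := by
              apply mul_le_mul h1 h2 (mul_nonneg hfij.le (norm_nonneg _))
              exact le_trans (mul_nonneg hgk.le (norm_nonneg _)) h1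
      have hfin := le_trans this hQD
      rw [div_mul_eq_mul_div, one_mul, div_div, le_div_iff₀ (by positivity)]
      calc ‖R i k * T k j‖ * (f (i ⊔ j) * g k)
          = f (i ⊔ j) * (g k * ‖R i k * T k j‖) := by ring
        _ ≤ D := hfin
  have hsumbound : Summable fun k : ℕ+ => (1 / g k) * (D / f (max i j)) :=
    hCg.mul_right _
  have hsumnorm : Summable fun k : ℕ+ => ‖R i k * T k j‖ :=
    Summable.of_nonneg_of_le (fun k => norm_nonneg _) key hsumbound
  have h1 : ‖matMul R T i j‖ ≤ ∑' k : ℕ+, (1 / g k) * (D / f (max i j)) :=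
    le_trans (norm_tsum_le_tsum_norm hsumnorm) (Summable.tsum_le_tsum key hsumnorm hsumbound)
  have h2 : (∑' k : ℕ+, (1 / g k) * (D / f (max i j)))
      = (∑' m : ℕ+, 1 / g m) * (D / f (max i j)) := tsum_mul_right
  rw [h2] at h1
  calc f (max i j) * ‖matMul R T i j‖
      ≤ f (max i j) * ((∑' m : ℕ+, 1 / g m) * (D / f (max i j))) :=
        mul_le_mul_of_nonneg_left h1 hfij.le
    _ = (∑' m : ℕ+, 1 / g m) * D := by field_simp


/-- If `f, g` are monotone weights with `C_g = ∑ 1/g(n) < ∞`,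
`‖T‖_f, ‖T‖_g < ∞` and `C_g·‖T‖_g < 1`, then the series of norms
`∑_{n≥1} ‖T^n‖_f` converges and is at most `‖T‖_f / (1 − C_g·‖T‖_g)`;
here `matPow T n = T^(n+1)`, so `∑' (n : ℕ), ‖matPow T n‖_f = ∑_{n≥1} ‖T^n‖_f`. -/
theorem matPow_wnorm_summable
    {A : Type*} [NonUnitalNormedRing A] [CompleteSpace A]
    (f g : ℕ+ → ℝ) (hfmono : Monotone f) (hfpos : ∀ n, 0 < f n)
    (hgmono : Monotone g) (hgpos : ∀ n, 0 < g n)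
    (hCg : Summable fun n : ℕ+ => 1 / g n)
    (T : ℕ+ → ℕ+ → A)
    (hTf : WFinite f T) (hTg : WFinite g T)
    (hsmall : (∑' m : ℕ+, 1 / g m) * wnorm g T < 1) :
    (Summable fun n : ℕ => wnorm f (matPow T n)) ∧
    (∑' n : ℕ, wnorm f (matPow T n)) ≤
      wnorm f T / (1 - (∑' m : ℕ+, 1 / g m) * wnorm g T) := by
  set C := ∑' m : ℕ+, 1 / g m with hC
  set Mf := wnorm f T with hMf
  set Mg := wnorm g T with hMgdef
  set q := C * Mg with hq
  have hTf' : ∀ i j : ℕ+, f (max i j) * ‖T i j‖ ≤ Mf := fun i j =>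
    le_csSup hTf ⟨(i, j), rfl⟩
  have hTg' : ∀ i j : ℕ+, g (max i j) * ‖T i j‖ ≤ Mg := fun i j =>
    le_csSup hTg ⟨(i, j), rfl⟩
  have hMf0 : 0 ≤ Mf :=
    le_trans (mul_nonneg (hfpos _).le (norm_nonneg _)) (hTf' 1 1)
  have hMg0 : 0 ≤ Mg :=
    le_trans (mul_nonneg (hgpos _).le (norm_nonneg _)) (hTg' 1 1)
  have hC0 : 0 ≤ C := tsum_nonneg fun n => div_nonneg zero_le_one (hgpos n).le
  have hq0 : 0 ≤ q := mul_nonneg hC0 hMg0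
  have hq1 : q < 1 := hsmall
  have bound : ∀ n : ℕ,
      (∀ i j : ℕ+, f (max i j) * ‖matPow T n i j‖ ≤ Mf * q ^ n) ∧
      (∀ i j : ℕ+, g (max i j) * ‖matPow T n i j‖ ≤ Mg * q ^ n) := by
    intro n
    induction n with
    | zero =>
      refine ⟨fun i j => ?_, fun i j => ?_⟩
      · simpa [matPow] using hTf' i j
      · simpa [matPow] using hTg' i j
    | succ n ih =>
      constructor
      · intro i j
        have h := core_bound f g hfmono hfpos hgmono hgpos hCg (matPow T n) T
          (Mf * q ^ n) (Mg * q ^ n) Mf Mg ih.1 ih.2 hTf' hTg' hMg0 hMf0 i j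
        have heq : (Mg * q ^ n * Mf : ℝ) = Mf * q ^ n * Mg := by ring
        rw [heq, max_self] at h
        calc f (max i j) * ‖matPow T (n + 1) i j‖
            ≤ C * (Mf * q ^ n * Mg) := h
          _ = Mf * q ^ (n + 1) := by rw [pow_succ, hq]; ring
      · intro i j
        have h := core_bound g g hgmono hgpos hgmono hgpos hCg (matPow T n) T
          (Mg * q ^ n) (Mg * q ^ n) Mg Mg ih.2 ih.2 hTg' hTg' hMg0 hMg0 i j
        rw [max_self] at h
        calc g (max i j) * ‖matPow T (n + 1) i j‖
            ≤ C * (Mg * q ^ n * Mg) := h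
          _ = Mg * q ^ (n + 1) := by rw [pow_succ, hq]; ring
  have hwn_le : ∀ n : ℕ, wnorm f (matPow T n) ≤ Mf * q ^ n := by
    intro n
    apply Real.sSup_le
    · rintro x ⟨⟨i, j⟩, rfl⟩
      exact (bound n).1 i j
    · exact mul_nonneg hMf0 (pow_nonneg hq0 n)
  have hwn_nonneg : ∀ n : ℕ, 0 ≤ wnorm f (matPow T n) := by
    intro n
    have hbdd : BddAbove (Set.range fun p : ℕ+ × ℕ+ =>
        f (max p.1 p.2) * ‖matPow T n p.1 p.2‖) := by
      refine ⟨Mf * q ^ n, ?_⟩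
      rintro x ⟨⟨i, j⟩, rfl⟩
      exact (bound n).1 i j
    exact le_trans (mul_nonneg (hfpos _).le (norm_nonneg _))
      (le_csSup hbdd ⟨((1 : ℕ+), (1 : ℕ+)), rfl⟩)
  have hs_geom : Summable fun n : ℕ => Mf * q ^ n :=
    (summable_geometric_of_lt_one hq0 hq1).mul_left Mf
  have hsum : Summable fun n : ℕ => wnorm f (matPow T n) :=
    Summable.of_nonneg_of_le hwn_nonneg hwn_le hs_geom
  refine ⟨hsum, ?_⟩
  calc (∑' n : ℕ, wnorm f (matPow T n))
      ≤ ∑' n : ℕ, Mf * q ^ n := Summable.tsum_le_tsum hwn_le hsum hs_geom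
    _ = Mf * (1 - q)⁻¹ := by
        rw [tsum_mul_left, tsum_geometric_of_lt_one hq0 hq1]
    _ = Mf / (1 - q) := (div_eq_mul_inv _ _).symm
end

section
/- Let g be a monotonically increasing weight function with C_g = ∑_{n=1}^∞ 1/g(n) < ∞, and let T be a matrix with entries in A such that ‖T‖_g < 1/C_g and ‖T‖_f < ∞ for every weight f in a set W of monotonically increasing weight functions containing g. Then T is quasi-invertible in M(A,W): the matrix Y whose (i,j) entry is Y_{ij} := −∑_{n=1}^∞ (T^n)_{ij} (the series converging absolutely in A, where T^1 := T, T^{n+1} := T^n·T) satisfies ‖Y‖_f < ∞ for all f ∈ W, TY = YT, and T + Y − TY = 0. -/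
section WeightedNorm

variable {A : Type*} [NonUnitalNormedRing A]

def WNormLE (f : ℕ+ → ℝ) (c : ℝ) (T : ℕ+ → ℕ+ → A) : Prop :=
  ∀ i j, ‖T i j‖ ≤ c / f (max i j)

lemma matMul_neg_right (R S : ℕ+ → ℕ+ → A) :
    matMul R (fun i j => -S i j) = fun i j => -matMul R S i j := by
  funext i j
  simp only [matMul, mul_neg, tsum_neg]

lemma matMul_neg_left (R S : ℕ+ → ℕ+ → A) :
    matMul (fun i j => -R i j) S = fun i j => -matMul R S i j := by
  funext i j
  simp only [matMul, neg_mul, tsum_neg]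

lemma summable_norm_of_wNormLE {f : ℕ+ → ℝ} {c : ℕ → ℝ} {P : ℕ → ℕ+ → ℕ+ → A}
    (hP : ∀ n, WNormLE f (c n) (P n)) (hc : Summable c) (i j : ℕ+) :
    Summable fun n => ‖P n i j‖ :=
  (hc.div_const _).of_nonneg_of_le (fun _ => norm_nonneg _) fun n => hP n i j

namespace WNormLE

variable {f g : ℕ+ → ℝ} {c : ℝ} {T : ℕ+ → ℕ+ → A}

lemma of_wFinite (hf : ∀ n, 0 < f n) (hT : WFinite f T) : WNormLE f (wnorm f T) T :=
  fun i j => (le_div_iff₀' (hf _)).2 (le_csSup hT ⟨(i, j), rfl⟩)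

lemma wFinite (hT : WNormLE f c T) (hf : ∀ n, 0 < f n) : WFinite f T :=
  ⟨c, by rintro _ ⟨⟨i, j⟩, rfl⟩; exact (le_div_iff₀' (hf _)).1 (hT i j)⟩

lemma nonneg (hT : WNormLE f c T) (hf : ∀ n, 0 < f n) : 0 ≤ c := by
  have h := (norm_nonneg _).trans (hT 1 1)
  rwa [le_div_iff₀ (hf _), zero_mul] at h

lemma norm_le_of_le (hT : WNormLE f c T) (hf : Monotone f) (hfpos : ∀ n, 0 < f n)
    {i j m : ℕ+} (hm : m ≤ max i j) : ‖T i j‖ ≤ c / f m :=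
  (hT i j).trans (div_le_div_of_nonneg_left (hT.nonneg hfpos) (hfpos m) (hf hm))

lemma neg (hT : WNormLE f c T) : WNormLE f c (fun i j => -T i j) := fun i j => by
  simpa only [norm_neg] using hT i j

lemma tsum {c : ℕ → ℝ} {P : ℕ → ℕ+ → ℕ+ → A} (hP : ∀ n, WNormLE f (c n) (P n))
    (hc : Summable c) : WNormLE f (∑' n, c n) (fun i j => ∑' n, P n i j) := fun i j =>
  calc ‖∑' n, P n i j‖ ≤ ∑' n, ‖P n i j‖ :=
        norm_tsum_le_tsum_norm (summable_norm_of_wNormLE hP hc i j)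
    _ ≤ ∑' n, c n / f (max i j) :=
        (summable_norm_of_wNormLE hP hc i j).tsum_le_tsum (hP · i j) (hc.div_const _)
    _ = (∑' n, c n) / f (max i j) := tsum_div_const

variable (hf : Monotone f) (hfpos : ∀ n, 0 < f n) (hg : Monotone g) (hgpos : ∀ n, 0 < g n)
  {R S : ℕ+ → ℕ+ → A} {a a' b b' : ℝ}
include hf hfpos hg hgpos

lemma norm_mul_le (hRf : WNormLE f a R) (hRg : WNormLE g a' R) (hSf : WNormLE f b S)
    (hSg : WNormLE g b' S) (i j k : ℕ+) :
    ‖R i k * S k j‖ ≤ max (a * b') (a' * b) / (f (max i j) * g k) := by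
  have hpos : 0 < f (max i j) * g k := mul_pos (hfpos _) (hgpos _)
  have hmax : max i j ≤ max (max i k) (max k j) :=
    max_le_max (le_max_left i k) (le_max_right k j)
  refine (_root_.norm_mul_le _ _).trans ?_
  rcases le_max_iff.1 hmax with h | h
  · calc ‖R i k‖ * ‖S k j‖ ≤ a / f (max i j) * (b' / g k) :=
          mul_le_mul (hRf.norm_le_of_le hf hfpos h) (hSg.norm_le_of_le hg hgpos (le_max_left _ _))
            (norm_nonneg _) (div_nonneg (hRf.nonneg hfpos) (hfpos _).le)
      _ = a * b' / (f (max i j) * g k) := div_mul_div_comm _ _ _ _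
      _ ≤ _ := div_le_div_of_nonneg_right (le_max_left _ _) hpos.le
  · calc ‖R i k‖ * ‖S k j‖ ≤ a' / g k * (b / f (max i j)) :=
          mul_le_mul (hRg.norm_le_of_le hg hgpos (le_max_right _ _)) (hSf.norm_le_of_le hf hfpos h)
            (norm_nonneg _) (div_nonneg (hRg.nonneg hgpos) (hgpos _).le)
      _ = a' * b / (f (max i j) * g k) := by rw [div_mul_div_comm, mul_comm (g k)]
      _ ≤ _ := div_le_div_of_nonneg_right (le_max_right _ _) hpos.le

lemma matMul (hCg : Summable fun n => 1 / g n) (hRf : WNormLE f a R) (hRg : WNormLE g a' R)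
    (hSf : WNormLE f b S) (hSg : WNormLE g b' S) :
    WNormLE f (max (a * b') (a' * b) * ∑' n, 1 / g n) (_root_.matMul R S) := fun i j => by
  set d := max (a * b') (a' * b) / f (max i j)
  have hterm : ∀ k, ‖R i k * S k j‖ ≤ d * (1 / g k) := fun k =>
    (norm_mul_le hf hfpos hg hgpos hRf hRg hSf hSg i j k).trans_eq (by ring)
  have hsum : Summable fun k => ‖R i k * S k j‖ :=
    (hCg.mul_left d).of_nonneg_of_le (fun _ => norm_nonneg _) hterm
  calc ‖∑' k, R i k * S k j‖ ≤ ∑' k, ‖R i k * S k j‖ := norm_tsum_le_tsum_norm hsum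
    _ ≤ ∑' k, d * (1 / g k) := hsum.tsum_le_tsum hterm (hCg.mul_left d)
    _ = max (a * b') (a' * b) * (∑' n, 1 / g n) / f (max i j) := by
        rw [tsum_mul_left, mul_div_right_comm]

lemma matPow (hCg : Summable fun n => 1 / g n) {M t : ℝ} (hTf : WNormLE f M T)
    (hTg : WNormLE g t T) (n : ℕ) :
    WNormLE f (M * (t * ∑' n, 1 / g n) ^ n) (_root_.matPow T n) := by
  set q := t * ∑' n, 1 / g n
  suffices h : WNormLE f (M * q ^ n) (_root_.matPow T n) ∧
      WNormLE g (t * q ^ n) (_root_.matPow T n) from h.1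
  induction n with
  | zero => simpa only [pow_zero, mul_one] using ⟨hTf, hTg⟩
  | succ n ih =>
    have hq : ∀ u, max (u * q ^ n * t) (t * q ^ n * u) * ∑' n, 1 / g n = u * q ^ (n + 1) :=
      fun u => by
        rw [show t * q ^ n * u = u * q ^ n * t by ring, max_self, pow_succ]
        ring
    exact ⟨hq M ▸ ih.1.matMul hf hfpos hg hgpos hCg ih.2 hTf hTg,
      hq t ▸ ih.2.matMul hg hgpos hg hgpos hCg ih.2 hTg hTg⟩

end WNormLE

section Summation

variable {g : ℕ+ → ℝ} (hg : Monotone g) (hgpos : ∀ n, 0 < g n)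
  (hCg : Summable fun n => 1 / g n)
include hg hgpos hCg

theorem matMul_assoc_of_wNormLE {R S U : ℕ+ → ℕ+ → A} {a b c : ℝ} [CompleteSpace A]
    (hR : WNormLE g a R) (hS : WNormLE g b S) (hU : WNormLE g c U) :
    matMul R (matMul S U) = matMul (matMul R S) U := by
  funext i j
  have hb : 0 ≤ b / g 1 := div_nonneg (hS.nonneg hgpos) (hgpos 1).le
  have hRk : ∀ k, ‖R i k‖ ≤ a * (1 / g k) := fun k =>
    (hR.norm_le_of_le hg hgpos (le_max_right _ _)).trans_eq (mul_one_div _ _).symm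
  have hSkl : ∀ k l, ‖S k l‖ ≤ b / g 1 := fun k l => hS.norm_le_of_le hg hgpos one_le
  have hUl : ∀ l, ‖U l j‖ ≤ c * (1 / g l) := fun l =>
    (hU.norm_le_of_le hg hgpos (le_max_left _ _)).trans_eq (mul_one_div _ _).symm
  have hrow : ∀ k, Summable fun l => S k l * U l j := fun k =>
    .of_norm_bounded ((hCg.mul_left c).mul_left _) fun l => norm_mul_le_of_le (hSkl k l) (hUl l)
  have hcol : ∀ l, Summable fun k => R i k * S k l := fun l =>
    .of_norm_bounded ((hCg.mul_left a).mul_right _) fun k => norm_mul_le_of_le (hRk k) (hSkl k l)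
  have hF : Summable fun p : ℕ+ × ℕ+ => R i p.1 * (S p.1 p.2 * U p.2 j) := by
    refine .of_norm_bounded ((hCg.mul_left a).mul_of_nonneg ((hCg.mul_left c).mul_left (b / g 1))
      (fun k => (hRk k).trans' (norm_nonneg _)) fun l => ?_) fun p => ?_
    · exact mul_nonneg hb ((hUl l).trans' (norm_nonneg _))
    · exact norm_mul_le_of_le (hRk p.1) (norm_mul_le_of_le (hSkl p.1 p.2) (hUl p.2))
  calc ∑' k, R i k * ∑' l, S k l * U l j = ∑' k, ∑' l, R i k * (S k l * U l j) :=
        tsum_congr fun k => ((hrow k).tsum_mul_left _).symm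
    _ = ∑' l, ∑' k, R i k * (S k l * U l j) := hF.tsum_comm.symm
    _ = ∑' l, (∑' k, R i k * S k l) * U l j := tsum_congr fun l => by
        simp only [← mul_assoc]
        exact (hcol l).tsum_mul_right _

theorem matMul_tsum_right {R : ℕ+ → ℕ+ → A} {P : ℕ → ℕ+ → ℕ+ → A} {a : ℝ} {c : ℕ → ℝ}
    [CompleteSpace A] (hR : WNormLE g a R) (hP : ∀ n, WNormLE g (c n) (P n)) (hc : Summable c) :
    matMul R (fun i j => ∑' n, P n i j) = fun i j => ∑' n, matMul R (P n) i j := by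
  funext i j
  have hRk : ∀ k, ‖R i k‖ ≤ a * (1 / g k) := fun k =>
    (hR.norm_le_of_le hg hgpos (le_max_right _ _)).trans_eq (mul_one_div _ _).symm
  have hF : Summable fun p : ℕ+ × ℕ => R i p.1 * P p.2 p.1 j :=
    .of_norm_bounded ((hCg.mul_left a).mul_of_nonneg (hc.div_const (g 1))
      (fun k => (hRk k).trans' (norm_nonneg _))
      fun n => div_nonneg ((hP n).nonneg hgpos) (hgpos 1).le)
      fun p => norm_mul_le_of_le (hRk p.1) ((hP p.2).norm_le_of_le hg hgpos one_le)
  calc ∑' k, R i k * ∑' n, P n k j = ∑' k, ∑' n, R i k * P n k j :=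
        tsum_congr fun k => ((summable_norm_of_wNormLE hP hc k j).of_norm.tsum_mul_left _).symm
    _ = ∑' n, ∑' k, R i k * P n k j := hF.tsum_comm.symm

theorem matMul_tsum_left {R : ℕ+ → ℕ+ → A} {P : ℕ → ℕ+ → ℕ+ → A} {a : ℝ} {c : ℕ → ℝ}
    [CompleteSpace A] (hR : WNormLE g a R) (hP : ∀ n, WNormLE g (c n) (P n)) (hc : Summable c) :
    matMul (fun i j => ∑' n, P n i j) R = fun i j => ∑' n, matMul (P n) R i j := by
  funext i j
  have hPk : ∀ n k, ‖P n i k‖ ≤ c n * (1 / g k) := fun n k =>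
    ((hP n).norm_le_of_le hg hgpos (le_max_right _ _)).trans_eq (mul_one_div _ _).symm
  have hF : Summable fun p : ℕ+ × ℕ => P p.2 i p.1 * R p.1 j :=
    .of_norm_bounded (hCg.mul_of_nonneg (hc.mul_right (a / g 1))
      (fun k => (one_div_pos.2 (hgpos k)).le)
      fun n => mul_nonneg ((hP n).nonneg hgpos) (div_nonneg (hR.nonneg hgpos) (hgpos 1).le))
      fun p => (norm_mul_le_of_le (hPk p.2 p.1) (hR.norm_le_of_le hg hgpos one_le)).trans_eq
        (by ring)
  calc ∑' k, (∑' n, P n i k) * R k j = ∑' k, ∑' n, P n i k * R k j :=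
        tsum_congr fun k => ((summable_norm_of_wNormLE hP hc i k).of_norm.tsum_mul_right _).symm
    _ = ∑' n, ∑' k, P n i k * R k j := hF.tsum_comm.symm

theorem matMul_matPow [CompleteSpace A] {T : ℕ+ → ℕ+ → A} {t : ℝ} (hT : WNormLE g t T) (n : ℕ) :
    matMul T (matPow T n) = matPow T (n + 1) := by
  induction n with
  | zero => rfl
  | succ n ih =>
    calc matMul T (matPow T (n + 1)) = matMul (matMul T (matPow T n)) T :=
          matMul_assoc_of_wNormLE hg hgpos hCg hT (hT.matPow hg hgpos hg hgpos hCg hT n) hT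
      _ = matPow T (n + 2) := by rw [ih]; rfl

end Summation

end WeightedNorm

/-- Let `W` be a set of monotone weights containing `g`, with
`C_g = ∑ 1/g(n) < ∞`. If `T ∈ M(A,W)` and `‖T‖_g < 1/C_g`, then `T` is quasi-invertible
in `M(A,W)`: the matrix `Y` with entries `Y_{ij} = −∑_{n≥1} (T^n)_{ij}` (the series
converging absolutely in `A`) lies in `M(A,W)`, commutes with `T`, and satisfies
`T + Y − TY = 0`. Here `matPow T n = T^(n+1)`, so `∑' (n : ℕ)` sums `T^1, T^2, …`. -/
theorem quasi_invertible_of_small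
    {A : Type*} [NonUnitalNormedRing A] [CompleteSpace A]
    (W : Set (ℕ+ → ℝ)) (hW : ∀ f ∈ W, Monotone f ∧ ∀ n, 0 < f n)
    (g : ℕ+ → ℝ) (hgW : g ∈ W)
    (hCg : Summable fun n : ℕ+ => 1 / g n)
    (T : ℕ+ → ℕ+ → A)
    (hT : ∀ f ∈ W, WFinite f T)
    (hsmall : wnorm g T < 1 / (∑' n : ℕ+, 1 / g n)) :
    (∀ i j : ℕ+, Summable fun n : ℕ => ‖matPow T n i j‖) ∧
    (∀ f ∈ W, WFinite f (fun i j => -∑' n : ℕ, matPow T n i j)) ∧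
    matMul T (fun i j => -∑' n : ℕ, matPow T n i j)
      = matMul (fun i j => -∑' n : ℕ, matPow T n i j) T ∧
    ∀ i j : ℕ+,
      T i j + (-∑' n : ℕ, matPow T n i j)
        - matMul T (fun i' j' => -∑' n : ℕ, matPow T n i' j') i j = 0 := by
  obtain ⟨hg, hgpos⟩ := hW g hgW
  have hTg := WNormLE.of_wFinite hgpos (hT g hgW)
  have hinv : ∀ n, 0 < 1 / g n := fun n => one_div_pos.2 (hgpos n)
  set q := wnorm g T * ∑' n : ℕ+, 1 / g n
  have hq : q < 1 := (lt_div_iff₀ (hCg.tsum_pos (fun n => (hinv n).le) 1 (hinv 1))).1 hsmall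
  have hgeo : Summable fun n => q ^ n := summable_geometric_of_lt_one
    (mul_nonneg (hTg.nonneg hgpos) (tsum_nonneg fun n => (hinv n).le)) hq
  have hsum : ∀ f : ℕ+ → ℝ, Summable fun n => wnorm f T * q ^ n := fun f => hgeo.mul_left _
  have hpow : ∀ f ∈ W, ∀ n, WNormLE f (wnorm f T * q ^ n) (matPow T n) := fun f hf =>
    (WNormLE.of_wFinite (hW f hf).2 (hT f hf)).matPow (hW f hf).1 (hW f hf).2 hg hgpos hCg hTg
  have hTY : matMul T (fun i j => -∑' n, matPow T n i j)
      = fun i j => -∑' n, matPow T (n + 1) i j := by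
    rw [matMul_neg_right, matMul_tsum_right hg hgpos hCg hTg (hpow g hgW) (hsum g)]
    simp only [matMul_matPow hg hgpos hCg hTg]
  have hYT : matMul (fun i j => -∑' n, matPow T n i j) T
      = fun i j => -∑' n, matPow T (n + 1) i j := by
    rw [matMul_neg_left, matMul_tsum_left hg hgpos hCg hTg (hpow g hgW) (hsum g)]
    rfl
  refine ⟨summable_norm_of_wNormLE (hpow g hgW) (hsum g),
    fun f hf => ((WNormLE.tsum (hpow f hf) (hsum f)).neg).wFinite (hW f hf).2,
    hTY.trans hYT.symm, fun i j => ?_⟩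
  rw [hTY, (summable_norm_of_wNormLE (hpow g hgW) (hsum g) i j).of_norm.tsum_eq_zero_add]
  change T i j + -(T i j + _) - -_ = 0
  abel
end

section
/- Let T = (t_{ij}) be a rapidly decreasing matrix with entries in A (i.e. sup_{i,j∈ℕ} (max(i,j))^m·‖t_{ij}‖ < ∞ for every m ∈ ℕ₀) such that sup_{i,j∈ℕ} (max(i,j))^2·‖t_{ij}‖ < 6/π². Then T is quasi-invertible within the rapidly decreasing matrices: there exists a rapidly decreasing matrix Y with entries in A such that TY = YT and T + Y − TY = 0 (products taken as the entrywise matrix product by absolutely convergent series). -/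
/-- A matrix `T` over `A` is rapidly decreasing if
`sup_{i,j} (max(i,j))^m·‖t_{ij}‖ < ∞` for every `m ∈ ℕ₀`. -/
def RapidlyDecreasing {A : Type*} [NonUnitalNormedRing A]
    (T : ℕ+ → ℕ+ → A) : Prop :=
  ∀ m : ℕ, BddAbove
    (Set.range fun p : ℕ+ × ℕ+ => (((max p.1 p.2 : ℕ+) : ℕ) : ℝ) ^ m * ‖T p.1 p.2‖)

/-!
Write `ν_m(R) = sup_{i,j} max(i,j)^m ‖r_ij‖`. The inequality `max(i,j) k ≤ max(i,k) max(k,j)`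
and `∑ 1/k² = π²/6` give `ν₂(RS) ≤ (π²/6) ν₂(R) ν₂(S)`, so with `q = (π²/6) ν₂(T) < 1` the
powers satisfy `ν₂(T^(n+1)) ≤ ν₂(T) qⁿ`. The Neumann series `Y = -(T + T² + ⋯)` therefore converges
absolutely entrywise, which justifies exchanging the sums in `TY` and `YT`; both equal
`-(T² + T³ + ⋯) = Y + T`. For higher weights, `max(i,j)^m ≤ max(i,k)^m + max(k,j)^m` gives the
Leibniz-type bound `ν_m(RS) ≤ (π²/6) (ν_m(R) ν₂(S) + ν₂(R) ν_m(S))`, hence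
`ν_m(T^(n+1)) ≤ (n+1) ν_m(T) qⁿ`, which is summable in `n`: `Y` is rapidly decreasing.
-/

open Real

section

variable {A : Type*} [NonUnitalNormedRing A]

noncomputable def maxWeight (i j : ℕ+) : ℝ := ((max i j : ℕ+) : ℕ)

lemma maxWeight_eq (i j : ℕ+) : maxWeight i j = max (i : ℝ) (j : ℝ) :=
  Monotone.map_max (f := fun i : ℕ+ => ((i : ℕ) : ℝ)) fun _ _ h => Nat.cast_le.2 h

lemma left_le_maxWeight (i j : ℕ+) : (i : ℝ) ≤ maxWeight i j :=
  (maxWeight_eq i j).symm ▸ le_max_left _ _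

lemma right_le_maxWeight (i j : ℕ+) : (j : ℝ) ≤ maxWeight i j :=
  (maxWeight_eq i j).symm ▸ le_max_right _ _

lemma one_le_coe_pnat (i : ℕ+) : (1 : ℝ) ≤ i := Nat.one_le_cast.2 i.pos

lemma maxWeight_pos (i j : ℕ+) : 0 < maxWeight i j :=
  zero_lt_one.trans_le ((one_le_coe_pnat i).trans (left_le_maxWeight i j))

lemma maxWeight_pow_le_add (m : ℕ) (i j k : ℕ+) :
    maxWeight i j ^ m ≤ maxWeight i k ^ m + maxWeight k j ^ m := by
  have hle : maxWeight i j ≤ max (maxWeight i k) (maxWeight k j) := by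
    simp only [maxWeight_eq]
    exact max_le (le_max_of_le_left (le_max_left _ _)) (le_max_of_le_right (le_max_right _ _))
  calc maxWeight i j ^ m ≤ max (maxWeight i k) (maxWeight k j) ^ m :=
        pow_le_pow_left₀ (maxWeight_pos i j).le hle m
    _ ≤ maxWeight i k ^ m + maxWeight k j ^ m := by
        rcases max_cases (maxWeight i k) (maxWeight k j) with ⟨h, -⟩ | ⟨h, -⟩ <;> rw [h]
        · exact le_add_of_nonneg_right (pow_nonneg (maxWeight_pos k j).le m)
        · exact le_add_of_nonneg_left (pow_nonneg (maxWeight_pos i k).le m)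

lemma maxWeight_mul_le (i j k : ℕ+) : maxWeight i j * k ≤ maxWeight i k * maxWeight k j := by
  simp only [maxWeight_eq]
  have hi := one_le_coe_pnat i
  have hj := one_le_coe_pnat j
  have hk := one_le_coe_pnat k
  rcases le_total (i : ℝ) j with h1 | h1 <;> rcases le_total (k : ℝ) i with h2 | h2 <;>
    rcases le_total (k : ℝ) j with h3 | h3 <;> simp only [max_eq_left, max_eq_right, *] <;>
    nlinarith

lemma hasSum_one_div_pnat_sq : HasSum (fun k : ℕ+ => 1 / (k : ℝ) ^ 2) (π ^ 2 / 6) := by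
  refine hasSum_pnat_iff (f := fun n : ℕ => 1 / (n : ℝ) ^ 2) |>.2 ?_
  rw [Nat.cast_zero, zero_pow two_ne_zero, div_zero, add_zero]
  exact hasSum_zeta_two

lemma summable_div_pnat_sq (a : ℝ) : Summable fun k : ℕ+ => a / (k : ℝ) ^ 2 := by
  simpa only [mul_one_div] using hasSum_one_div_pnat_sq.summable.mul_left a

lemma mul_norm_matMul_le {R S : ℕ+ → ℕ+ → A} {i j : ℕ+} {x d : ℝ} (hx : 0 < x)
    (h : ∀ k : ℕ+, (k : ℝ) ^ 2 * (x * (‖R i k‖ * ‖S k j‖)) ≤ d) :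
    x * ‖matMul R S i j‖ ≤ π ^ 2 / 6 * d := by
  have hterm : ∀ k : ℕ+, ‖R i k * S k j‖ ≤ d / x * (1 / (k : ℝ) ^ 2) := fun k => by
    rw [div_mul_div_comm, mul_one, le_div_iff₀' (by positivity), mul_comm x, mul_assoc]
    exact (mul_le_mul_of_nonneg_left (mul_le_mul_of_nonneg_left (norm_mul_le _ _) hx.le)
      (by positivity)).trans (h k)
  calc x * ‖matMul R S i j‖ ≤ x * (d / x * (π ^ 2 / 6)) :=
        mul_le_mul_of_nonneg_left (tsum_of_norm_bounded
          (hasSum_one_div_pnat_sq.mul_left (d / x)) hterm) hx.le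
    _ = π ^ 2 / 6 * d := by field_simp

noncomputable def matPowSucc (T : ℕ+ → ℕ+ → A) : ℕ → ℕ+ → ℕ+ → A
  | 0 => T
  | n + 1 => matMul T (matPowSucc T n)

lemma matPowSucc_zero (T : ℕ+ → ℕ+ → A) : matPowSucc T 0 = T := rfl

lemma matPowSucc_succ (T : ℕ+ → ℕ+ → A) (n : ℕ) :
    matPowSucc T (n + 1) = matMul T (matPowSucc T n) := rfl

def DecayBound (m : ℕ) (a : ℝ) (R : ℕ+ → ℕ+ → A) : Prop :=
  ∀ i j, maxWeight i j ^ m * ‖R i j‖ ≤ a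

lemma rapidlyDecreasing_iff {T : ℕ+ → ℕ+ → A} :
    RapidlyDecreasing T ↔ ∀ m, ∃ a, DecayBound m a T := by
  simp only [RapidlyDecreasing, bddAbove_def, Set.forall_mem_range, Prod.forall, DecayBound,
    maxWeight]

namespace DecayBound

variable {m : ℕ} {a b a₂ b₂ C : ℝ} {R S T : ℕ+ → ℕ+ → A}

lemma nonneg (hR : DecayBound m a R) : 0 ≤ a :=
  (mul_nonneg (pow_nonneg (maxWeight_pos 1 1).le m) (norm_nonneg _)).trans (hR 1 1)

lemma norm_le (hR : DecayBound m a R) (i j : ℕ+) : ‖R i j‖ ≤ a :=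
  calc ‖R i j‖ ≤ maxWeight i j ^ m * ‖R i j‖ :=
        le_mul_of_one_le_left (norm_nonneg _)
          (one_le_pow₀ ((one_le_coe_pnat i).trans (left_le_maxWeight i j)))
    _ ≤ a := hR i j

lemma pow_left_mul_norm_le (hR : DecayBound m a R) (i j : ℕ+) : (i : ℝ) ^ m * ‖R i j‖ ≤ a :=
  (mul_le_mul_of_nonneg_right (pow_le_pow_left₀ (by positivity) (left_le_maxWeight i j) m)
    (norm_nonneg _)).trans (hR i j)

lemma pow_right_mul_norm_le (hR : DecayBound m a R) (i j : ℕ+) : (j : ℝ) ^ m * ‖R i j‖ ≤ a :=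
  (mul_le_mul_of_nonneg_right (pow_le_pow_left₀ (by positivity) (right_le_maxWeight i j) m)
    (norm_nonneg _)).trans (hR i j)

lemma norm_le_div_sq_left (hR : DecayBound 2 a R) (i j : ℕ+) : ‖R i j‖ ≤ a / (i : ℝ) ^ 2 :=
  (le_div_iff₀' (by positivity)).2 (hR.pow_left_mul_norm_le i j)

lemma norm_le_div_sq_right (hR : DecayBound 2 a R) (i j : ℕ+) : ‖R i j‖ ≤ a / (j : ℝ) ^ 2 :=
  (le_div_iff₀' (by positivity)).2 (hR.pow_right_mul_norm_le i j)

lemma matMul_sq (hR : DecayBound 2 a R) (hS : DecayBound 2 b S) :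
    DecayBound 2 (π ^ 2 / 6 * (a * b)) (matMul R S) := by
  intro i j
  refine mul_norm_matMul_le (by positivity [maxWeight_pos i j]) fun k => ?_
  calc (k : ℝ) ^ 2 * (maxWeight i j ^ 2 * (‖R i k‖ * ‖S k j‖))
      = (maxWeight i j * k) ^ 2 * (‖R i k‖ * ‖S k j‖) := by ring
    _ ≤ (maxWeight i k * maxWeight k j) ^ 2 * (‖R i k‖ * ‖S k j‖) :=
        mul_le_mul_of_nonneg_right
          (pow_le_pow_left₀ (by positivity [maxWeight_pos i j]) (maxWeight_mul_le i j k) 2)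
          (by positivity)
    _ = (maxWeight i k ^ 2 * ‖R i k‖) * (maxWeight k j ^ 2 * ‖S k j‖) := by ring
    _ ≤ a * b := mul_le_mul (hR i k) (hS k j) (by positivity) hR.nonneg

lemma matMul_pow (hR : DecayBound m a R) (hR₂ : DecayBound 2 a₂ R) (hS : DecayBound m b S)
    (hS₂ : DecayBound 2 b₂ S) :
    DecayBound m (π ^ 2 / 6 * (a * b₂ + a₂ * b)) (matMul R S) := by
  intro i j
  refine mul_norm_matMul_le (by positivity [maxWeight_pos i j]) fun k => ?_
  calc (k : ℝ) ^ 2 * (maxWeight i j ^ m * (‖R i k‖ * ‖S k j‖))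
      ≤ (k : ℝ) ^ 2 * ((maxWeight i k ^ m + maxWeight k j ^ m) * (‖R i k‖ * ‖S k j‖)) := by
        gcongr
        exact maxWeight_pow_le_add m i j k
    _ = (maxWeight i k ^ m * ‖R i k‖) * ((k : ℝ) ^ 2 * ‖S k j‖) +
          ((k : ℝ) ^ 2 * ‖R i k‖) * (maxWeight k j ^ m * ‖S k j‖) := by ring
    _ ≤ a * b₂ + a₂ * b :=
        add_le_add (mul_le_mul (hR i k) (hS₂.pow_left_mul_norm_le k j) (by positivity) hR.nonneg)
          (mul_le_mul (hR₂.pow_right_mul_norm_le i k) (hS k j) (by positivity [maxWeight_pos k j])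
            hR₂.nonneg)

lemma matPowSucc_sq (hT : DecayBound 2 C T) (n : ℕ) :
    DecayBound 2 (C * (π ^ 2 / 6 * C) ^ n) (matPowSucc T n) := by
  induction n with
  | zero => simpa [matPowSucc_zero] using hT
  | succ n ih => rw [matPowSucc_succ]; convert hT.matMul_sq ih using 1; ring

lemma matPowSucc_pow (hT : DecayBound m a T) (hT₂ : DecayBound 2 C T) (n : ℕ) :
    DecayBound m ((n + 1) * a * (π ^ 2 / 6 * C) ^ n) (matPowSucc T n) := by
  induction n with
  | zero => simpa [matPowSucc_zero] using hT
  | succ n ih =>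
    rw [matPowSucc_succ]
    convert hT.matMul_pow hT₂ ih (hT₂.matPowSucc_sq n) using 1
    push_cast; ring

end DecayBound

noncomputable def neumannQuasiInv (T : ℕ+ → ℕ+ → A) : ℕ+ → ℕ+ → A :=
  fun i j => -∑' n, matPowSucc T n i j

variable {T : ℕ+ → ℕ+ → A} {C : ℝ}

lemma decayBound_neumannQuasiInv {m : ℕ} {a : ℝ} (hT₂ : DecayBound 2 C T)
    (hq : π ^ 2 / 6 * C < 1) (hT : DecayBound m a T) :
    DecayBound m (∑' n : ℕ, (n + 1) * a * (π ^ 2 / 6 * C) ^ n) (neumannQuasiInv T) := by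
  set q := π ^ 2 / 6 * C
  have hq₀ : 0 ≤ q := by positivity [hT₂.nonneg]
  have hsum : Summable fun n : ℕ => (n + 1) * a * q ^ n :=
    (((summable_pow_mul_geometric_of_norm_lt_one 1 (by rwa [norm_of_nonneg hq₀])).add
      (summable_geometric_of_lt_one hq₀ hq)).mul_left a).congr fun n => by ring
  intro i j
  have hw : 0 < maxWeight i j ^ m := pow_pos (maxWeight_pos i j) m
  rw [neumannQuasiInv, norm_neg, ← le_div_iff₀' hw]
  exact tsum_of_norm_bounded (hsum.hasSum.div_const _)
    fun n => (le_div_iff₀' hw).2 (hT.matPowSucc_pow hT₂ n i j)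

variable [CompleteSpace A]

lemma summable_uncurry_of_norm_le_mul {ι κ : Type*} {F : ι → κ → A} {u : ι → ℝ} {v : κ → ℝ}
    (hu : Summable u) (hv : Summable v) (hF : ∀ i k, ‖F i k‖ ≤ u i * v k) :
    Summable (Function.uncurry F) :=
  .of_norm_bounded (hu.abs.mul_of_nonneg hv.abs (fun _ => abs_nonneg _) fun _ => abs_nonneg _)
    fun p => (hF p.1 p.2).trans ((le_abs_self _).trans_eq (abs_mul _ _))

lemma tsum_mul_tsum_comm {ι κ : Type*} {f : ι → A} {g : ι → κ → A} {u : ι → ℝ} {v : κ → ℝ}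
    (hu : Summable u) (hv : Summable v) (hf : ∀ i, ‖f i‖ ≤ u i) (hg : ∀ i k, ‖g i k‖ ≤ v k) :
    ∑' i, f i * ∑' k, g i k = ∑' k, ∑' i, f i * g i k := by
  have hF : Summable (Function.uncurry fun i k => f i * g i k) :=
    summable_uncurry_of_norm_le_mul hu hv fun i k => (norm_mul_le _ _).trans
      (mul_le_mul (hf i) (hg i k) (norm_nonneg _) ((norm_nonneg _).trans (hf i)))
  calc ∑' i, f i * ∑' k, g i k = ∑' i, ∑' k, f i * g i k :=
        tsum_congr fun i => ((Summable.of_norm_bounded hv (hg i)).tsum_mul_left (f i)).symm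
    _ = ∑' k, ∑' i, f i * g i k := hF.tsum_comm.symm

lemma tsum_tsum_mul_comm {ι κ : Type*} {f : ι → A} {g : ι → κ → A} {u : ι → ℝ} {v : κ → ℝ}
    (hu : Summable u) (hv : Summable v) (hf : ∀ i, ‖f i‖ ≤ u i) (hg : ∀ i k, ‖g i k‖ ≤ v k) :
    ∑' i, (∑' k, g i k) * f i = ∑' k, ∑' i, g i k * f i := by
  have hF : Summable (Function.uncurry fun i k => g i k * f i) :=
    summable_uncurry_of_norm_le_mul hu hv fun i k => (norm_mul_le _ _).trans <| by
      rw [mul_comm (u i)]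
      exact mul_le_mul (hg i k) (hf i) (norm_nonneg _) ((norm_nonneg _).trans (hg i k))
  calc ∑' i, (∑' k, g i k) * f i = ∑' i, ∑' k, g i k * f i :=
        tsum_congr fun i => ((Summable.of_norm_bounded hv (hg i)).tsum_mul_right (f i)).symm
    _ = ∑' k, ∑' i, g i k * f i := hF.tsum_comm.symm

lemma matMul_assoc_of_decayBound {R S U : ℕ+ → ℕ+ → A} {a b c : ℝ} (hR : DecayBound 2 a R)
    (hS : ∀ k l, ‖S k l‖ ≤ b) (hU : DecayBound 2 c U) :
    matMul (matMul R S) U = matMul R (matMul S U) := by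
  funext i j
  have hRS : ∀ l, Summable fun k => R i k * S k l := fun l =>
    .of_norm_bounded ((summable_div_pnat_sq a).mul_right b) fun k =>
      (norm_mul_le _ _).trans (mul_le_mul (hR.norm_le_div_sq_right i k) (hS k l)
        (norm_nonneg _) (div_nonneg hR.nonneg (by positivity)))
  calc matMul (matMul R S) U i j = ∑' l, (∑' k, R i k * S k l) * U l j := rfl
    _ = ∑' l, ∑' k, R i k * (S k l * U l j) := tsum_congr fun l => by
        rw [← (hRS l).tsum_mul_right]
        simp only [mul_assoc]
    _ = ∑' k, R i k * ∑' l, S k l * U l j :=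
        (tsum_mul_tsum_comm (summable_div_pnat_sq a) (summable_div_pnat_sq (b * c))
          (hR.norm_le_div_sq_right i) fun k l => (norm_mul_le _ _).trans <| by
            rw [mul_div_assoc]
            exact mul_le_mul (hS k l) (hU.norm_le_div_sq_left l j) (norm_nonneg _)
              ((norm_nonneg _).trans (hS k l))).symm

lemma matMul_matPowSucc_comm (hT : DecayBound 2 C T) (n : ℕ) :
    matMul (matPowSucc T n) T = matPowSucc T (n + 1) := by
  induction n with
  | zero => rfl
  | succ n ih =>
    rw [matPowSucc_succ T n, matMul_assoc_of_decayBound hT (hT.matPowSucc_sq n).norm_le hT, ih,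
      matPowSucc_succ T (n + 1)]

lemma summable_matPowSucc (hT : DecayBound 2 C T) (hq : π ^ 2 / 6 * C < 1) (i j : ℕ+) :
    Summable fun n => matPowSucc T n i j :=
  .of_norm_bounded ((summable_geometric_of_lt_one (by positivity [hT.nonneg]) hq).mul_left C)
    fun n => (hT.matPowSucc_sq n).norm_le i j

lemma matMul_neumannQuasiInv (hT : DecayBound 2 C T) (hq : π ^ 2 / 6 * C < 1) :
    matMul T (neumannQuasiInv T) = fun i j => -∑' n, matPowSucc T (n + 1) i j := by
  funext i j
  calc matMul T (neumannQuasiInv T) i j = -∑' k, T i k * ∑' n, matPowSucc T n k j := by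
        simp only [matMul, neumannQuasiInv, mul_neg, tsum_neg]
    _ = -∑' n, matPowSucc T (n + 1) i j := by
        rw [tsum_mul_tsum_comm (summable_div_pnat_sq C)
          ((summable_geometric_of_lt_one (by positivity [hT.nonneg]) hq).mul_left C)
          (hT.norm_le_div_sq_right i) fun k n => (hT.matPowSucc_sq n).norm_le k j]
        rfl

lemma neumannQuasiInv_matMul (hT : DecayBound 2 C T) (hq : π ^ 2 / 6 * C < 1) :
    matMul (neumannQuasiInv T) T = fun i j => -∑' n, matPowSucc T (n + 1) i j := by
  funext i j
  calc matMul (neumannQuasiInv T) T i j = -∑' k, (∑' n, matPowSucc T n i k) * T k j := by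
        simp only [matMul, neumannQuasiInv, neg_mul, tsum_neg]
    _ = -∑' n, matMul (matPowSucc T n) T i j := by
        rw [tsum_tsum_mul_comm (summable_div_pnat_sq C)
          ((summable_geometric_of_lt_one (by positivity [hT.nonneg]) hq).mul_left C)
          (fun k => hT.norm_le_div_sq_left k j) fun k n => (hT.matPowSucc_sq n).norm_le i k]
        rfl
    _ = -∑' n, matPowSucc T (n + 1) i j := by simp only [matMul_matPowSucc_comm hT]

end

/-- If `T` is a rapidly decreasing matrix over `A` with
`sup_{i,j} (max(i,j))²·‖t_{ij}‖ < 6/π²`, then `T` is quasi-invertible within the rapidly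
decreasing matrices: there is a rapidly decreasing `Y` with `TY = YT` and `T + Y − TY = 0`. -/
theorem rapidlyDecreasing_quasi_invertible
    {A : Type*} [NonUnitalNormedRing A] [CompleteSpace A]
    (T : ℕ+ → ℕ+ → A) (hT : RapidlyDecreasing T)
    (hsmall : sSup (Set.range fun p : ℕ+ × ℕ+ =>
        (((max p.1 p.2 : ℕ+) : ℕ) : ℝ) ^ 2 * ‖T p.1 p.2‖) < 6 / Real.pi ^ 2) :
    ∃ Y : ℕ+ → ℕ+ → A, RapidlyDecreasing Y ∧
      matMul T Y = matMul Y T ∧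
      ∀ i j : ℕ+, T i j + Y i j - matMul T Y i j = 0 := by
  obtain ⟨C, hT₂, hC⟩ : ∃ C, DecayBound 2 C T ∧ C < 6 / π ^ 2 :=
    ⟨_, fun i j => le_csSup (hT 2) ⟨(i, j), rfl⟩, hsmall⟩
  have hq : π ^ 2 / 6 * C < 1 :=
    calc π ^ 2 / 6 * C < π ^ 2 / 6 * (6 / π ^ 2) := by gcongr
      _ = 1 := by field_simp
  refine ⟨neumannQuasiInv T, rapidlyDecreasing_iff.2 fun m => ?_, ?_, fun i j => ?_⟩
  · obtain ⟨a, ha⟩ := rapidlyDecreasing_iff.1 hT m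
    exact ⟨_, decayBound_neumannQuasiInv hT₂ hq ha⟩
  · rw [matMul_neumannQuasiInv hT₂ hq, neumannQuasiInv_matMul hT₂ hq]
  · rw [matMul_neumannQuasiInv hT₂ hq, neumannQuasiInv,
      (summable_matPowSucc hT₂ hq i j).tsum_eq_zero_add, matPowSucc_zero]
    beta_reduce
    abel
end
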